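/- arXiv:1803.07032 — 3 statements merged into one kernel-verified Lean document; each statement's English description precedes it below -/
import Mathlib

section
/- The class of graphs embeddable on a fixed 2-complex is not closed under taking minors: there exists a 2-complex C and a graph G embeddable into C such that some graph obtained from G by contracting one edge is not embeddable into C. -/
/-- A finite (multi)graph: finite types of vertices and edges, each edge with an
ordered pair of endpoints (loops and multiple edges are allowed). -/
structure FinGraph where
  V : Type
  E : Type
  [fintypeV : Fintype V]
  [fintypeE : Fintype E]
  ends : E → V × V

attribute [instance] FinGraph.fintypeV FinGraph.fintypeE

/-- A topological embedding of the realization of a finite graph into a space `S`: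
vertices go to distinct points, edges to arcs which are injective on their interiors,
whose interiors avoid the vertices and each other. -/
structure GraphEmb (G : FinGraph) (S : Type*) [TopologicalSpace S] where
  vmap : G.V → S
  emap : (e : G.E) → Path (vmap (G.ends e).1) (vmap (G.ends e).2)
  vmap_injective : Function.Injective vmap
  emap_injOn : ∀ e : G.E, Set.InjOn (emap e) (Set.Ioo (0 : unitInterval) 1)
  emap_disjoint : ∀ e e' : G.E, e ≠ e' → ∀ t ∈ Set.Ioo (0 : unitInterval) 1,
    ∀ t' ∈ Set.Ioo (0 : unitInterval) 1, emap e t ≠ emap e' t'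
  emap_avoid : ∀ e : G.E, ∀ t ∈ Set.Ioo (0 : unitInterval) 1, ∀ v : G.V, emap e t ≠ vmap v

namespace GraphEmb

variable {G : FinGraph} {S : Type*} [TopologicalSpace S] (Γ : GraphEmb G S)

/-- The image of the graph in `S`. -/
def image : Set S := Set.range Γ.vmap ∪ ⋃ e : G.E, Set.range ⇑(Γ.emap e)

/-- The faces of the embedding are the connected components of the complement. -/
noncomputable def numFaces : ℕ := Nat.card (ConnectedComponents (↥((Γ.image)ᶜ)))

/-- The underlying set of a face of the embedding. -/
def faceSet (c : ConnectedComponents (↥((Γ.image)ᶜ))) : Set S :=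
  Subtype.val '' (ConnectedComponents.mk ⁻¹' {c})

/-- An embedding is cellular if each face is homeomorphic to an open disk. -/
def IsCellular : Prop := ∀ x : S, x ∈ (Γ.image)ᶜ →
  Nonempty ((↥(connectedComponentIn ((Γ.image)ᶜ) x)) ≃ₜ
    (↥(Metric.ball (0 : EuclideanSpace ℝ (Fin 2)) 1)))

end GraphEmb

/-- A two-dimensional (abstract, finite) simplicial complex: a downward-closed family of
nonempty subsets of `Fin n` of cardinality at most 3 (nodes, segments, triangles). -/
structure TwoComplex where
  n : ℕ
  faces : Finset (Finset (Fin n))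
  nonempty_mem : ∀ s ∈ faces, s.Nonempty
  down_closed : ∀ s ∈ faces, ∀ t ⊆ s, t.Nonempty → t ∈ faces
  dim_le : ∀ s ∈ faces, s.card ≤ 3

namespace TwoComplex

/-- The geometric realization of a 2-complex, as the subset of `Fin n → ℝ` of convex
combinations supported on a simplex. -/
def space (C : TwoComplex) : Set (Fin C.n → ℝ) :=
  {x | (∀ v, 0 ≤ x v) ∧ (∑ v, x v) = 1 ∧ ∃ s ∈ C.faces, ∀ v, x v ≠ 0 → v ∈ s}

/-- A 2-complex contains a 3-book if three distinct triangles share a common segment. -/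
def HasThreeBook (C : TwoComplex) : Prop :=
  ∃ t₁ ∈ C.faces, ∃ t₂ ∈ C.faces, ∃ t₃ ∈ C.faces,
    t₁ ≠ t₂ ∧ t₁ ≠ t₃ ∧ t₂ ≠ t₃ ∧ t₁.card = 3 ∧ t₂.card = 3 ∧ t₃.card = 3 ∧
    ∃ s : Finset (Fin C.n), s.card = 2 ∧ s ⊆ t₁ ∧ s ⊆ t₂ ∧ s ⊆ t₃

end TwoComplex


/-- `G'` is obtained from `G` by contracting one edge `e₀`: the two endpoints of `e₀`
are identified, `e₀` is deleted, and all other edges keep their (projected) endpoints. -/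
def IsEdgeContraction (G G' : FinGraph) : Prop :=
  ∃ (e₀ : G.E) (φ : G.V → G'.V) (ψ : {e : G.E // e ≠ e₀} → G'.E),
    Function.Surjective φ ∧ Function.Bijective ψ ∧
    (∀ x y : G.V, φ x = φ y ↔
      (x = y ∨ ({x, y} : Set G.V) = {(G.ends e₀).1, (G.ends e₀).2})) ∧
    (∀ e : {e : G.E // e ≠ e₀},
      G'.ends (ψ e) = (φ (G.ends e.1).1, φ (G.ends e.1).2))

open Set

def Hfaces : Finset (Finset (Fin 6)) :=
  {{0},{1},{2},{3},{4},{5},{0,2},{1,2},{2,3},{3,4},{3,5}}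

def Hcx : TwoComplex where
  n := 6
  faces := Hfaces
  nonempty_mem := by decide
  down_closed := by decide
  dim_le := by decide

attribute [reducible] Hcx

lemma Hcx_faces : Hcx.faces = Hfaces := rfl

def Gends : Fin 5 → Fin 6 × Fin 6 := ![(2,3),(2,0),(2,1),(3,4),(3,5)]

def Gr : FinGraph where
  V := Fin 6
  E := Fin 5
  ends := Gends

def Gr' : FinGraph where
  V := Fin 5
  E := Fin 4
  ends := fun e => (0, e.succ)

attribute [reducible] Gr

lemma Gr_ends_ne : ∀ e : Fin 5, (Gends e).1 ≠ (Gends e).2 := by decide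

lemma Gr_ends_face : ∀ e : Fin 5,
    ({(Gends e).1, (Gends e).2} : Finset (Fin 6)) ∈ Hfaces := by decide

lemma Hcx_card_le : ∀ s ∈ Hfaces, s.card ≤ 2 := by decide

section SpaceLemmas

lemma no_three_pos {x : Fin 6 → ℝ} (hx : x ∈ Hcx.space) {a b c : Fin 6}
    (hab : a ≠ b) (hac : a ≠ c) (hbc : b ≠ c)
    (ha : x a ≠ 0) (hb : x b ≠ 0) (hc : x c ≠ 0) : False := by
  obtain ⟨-, -, s, hs, hsupp⟩ := hx
  have h3 : ({a, b, c} : Finset (Fin 6)) ⊆ s := by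
    intro k hk
    simp only [Finset.mem_insert, Finset.mem_singleton] at hk
    rcases hk with rfl | rfl | rfl
    · exact hsupp _ ha
    · exact hsupp _ hb
    · exact hsupp _ hc
  have hcard : ({a, b, c} : Finset (Fin 6)).card = 3 := by
    rw [Finset.card_insert_of_notMem (by simp [hab, hac]),
      Finset.card_insert_of_notMem (by simp [hbc]), Finset.card_singleton]
  have h1 := Finset.card_le_card h3
  have h2 := Hcx_card_le s (Hcx_faces ▸ hs)
  omega

lemma zero_of_two_pos {x : Fin 6 → ℝ} (hx : x ∈ Hcx.space) {a b : Fin 6}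
    (hab : a ≠ b) (ha : 0 < x a) (hb : 0 < x b) :
    ∀ k, k ≠ a → k ≠ b → x k = 0 := by
  intro k hka hkb
  by_contra hk
  exact no_three_pos hx hka hkb hab hk ha.ne' hb.ne'

lemma sum_two {x : Fin 6 → ℝ} (hx : x ∈ Hcx.space) {a b : Fin 6} (hab : a ≠ b)
    (hz : ∀ k, k ≠ a → k ≠ b → x k = 0) : x a + x b = 1 := by
  have h := hx.2.1
  calc x a + x b = ∑ k ∈ ({a, b} : Finset (Fin 6)), x k := (Finset.sum_pair hab).symm
    _ = ∑ k, x k := by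
        refine Finset.sum_subset (Finset.subset_univ _) (fun k _ hk => ?_)
        simp only [Finset.mem_insert, Finset.mem_singleton, not_or] at hk
        exact hz k hk.1 hk.2
    _ = 1 := h

lemma eq_of_coord {x y : Fin 6 → ℝ} (hx : x ∈ Hcx.space) (hy : y ∈ Hcx.space)
    {a b : Fin 6} (hab : a ≠ b) (hxa : 0 < x a) (hxb : 0 < x b)
    (hya : 0 < y a) (hyb : 0 < y b) (h : x b = y b) : x = y := by
  have hzx := zero_of_two_pos hx hab hxa hxb
  have hzy := zero_of_two_pos hy hab hya hyb
  have hsx := sum_two hx hab hzx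
  have hsy := sum_two hy hab hzy
  funext k
  by_cases hka : k = a
  · subst hka; linarith
  · by_cases hkb : k = b
    · subst hkb; exact h
    · rw [hzx k hka hkb, hzy k hka hkb]

lemma pair_mem_faces {x : Fin 6 → ℝ} (hx : x ∈ Hcx.space) {a b : Fin 6}
    (hab : a ≠ b) (ha : x a ≠ 0) (hb : x b ≠ 0) :
    ({a, b} : Finset (Fin 6)) ∈ Hfaces := by
  obtain ⟨-, -, s, hs, hsupp⟩ := hx
  have hsub : ({a, b} : Finset (Fin 6)) ⊆ s := by
    intro k hk
    simp only [Finset.mem_insert, Finset.mem_singleton] at hk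
    rcases hk with rfl | rfl
    · exact hsupp _ ha
    · exact hsupp _ hb
  exact Hcx_faces ▸ Hcx.down_closed s hs _ hsub ⟨a, by simp⟩

end SpaceLemmas

section Seg

/-- The linear segment from vertex `i` to vertex `j` in the realization. -/
def seg (i j : Fin 6) (t : ℝ) : Fin 6 → ℝ :=
  fun k => (1 - t) * (if k = i then 1 else 0) + t * (if k = j then 1 else 0)

lemma seg_self (i j : Fin 6) (hij : i ≠ j) (t : ℝ) : seg i j t i = 1 - t := by
  simp [seg, hij]

lemma seg_other (i j : Fin 6) (hij : i ≠ j) (t : ℝ) : seg i j t j = t := by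
  simp [seg, Ne.symm hij]

lemma seg_zero' {i j k : Fin 6} (hki : k ≠ i) (hkj : k ≠ j) (t : ℝ) : seg i j t k = 0 := by
  simp [seg, hki, hkj]

lemma seg_mem (i j : Fin 6) (hij : i ≠ j) (hf : ({i, j} : Finset (Fin 6)) ∈ Hfaces)
    {t : ℝ} (ht : t ∈ Icc (0:ℝ) 1) : seg i j t ∈ Hcx.space := by
  refine ⟨fun v => ?_, ?_, ⟨{i, j}, hf, fun v hv => ?_⟩⟩
  · have h1 : (0:ℝ) ≤ (1 - t) * (if v = i then 1 else 0) :=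
      mul_nonneg (by linarith [ht.2]) (by positivity)
    have h2 : (0:ℝ) ≤ t * (if v = j then 1 else 0) :=
      mul_nonneg ht.1 (by positivity)
    exact add_nonneg h1 h2
  · show (∑ v, seg i j t v) = 1
    unfold seg
    rw [Finset.sum_add_distrib, ← Finset.mul_sum, ← Finset.mul_sum,
      Finset.sum_ite_eq' Finset.univ i (fun _ => (1:ℝ)),
      Finset.sum_ite_eq' Finset.univ j (fun _ => (1:ℝ))]
    simp
  · by_contra hv'
    simp only [Finset.mem_insert, Finset.mem_singleton, not_or] at hv'
    exact hv (seg_zero' hv'.1 hv'.2 t)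

def vert (v : Fin 6) : ↥Hcx.space :=
  ⟨fun k => if k = v then 1 else 0, by
    refine ⟨fun k => by positivity, ?_, ⟨{v}, by revert v; decide, fun k hk => ?_⟩⟩
    · show (∑ k, if k = v then (1:ℝ) else 0) = 1
      rw [Finset.sum_ite_eq' Finset.univ v (fun _ => (1:ℝ))]
      simp
    · simp only [Finset.mem_singleton]
      by_contra hkv
      simp [hkv] at hk⟩

lemma vert_injective : Function.Injective vert := by
  intro a b h
  by_contra hab
  have := congrFun (congrArg Subtype.val h) a
  simp [vert, hab] at this

/-- The path along segment `i j`. -/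
def segPath (i j : Fin 6) (hij : i ≠ j) (hf : ({i, j} : Finset (Fin 6)) ∈ Hfaces) :
    Path (vert i) (vert j) where
  toFun := fun t => ⟨seg i j t, seg_mem i j hij hf t.2⟩
  continuous_toFun := by
    refine Continuous.subtype_mk ?_ _
    refine continuous_pi fun k => ?_
    unfold seg
    fun_prop
  source' := by
    apply Subtype.ext
    funext k
    simp [seg, vert]
  target' := by
    apply Subtype.ext
    funext k
    by_cases hk : k = i <;> simp [seg, vert, hk, hij]

lemma segPath_coe (i j : Fin 6) (hij : i ≠ j) (hf : ({i, j} : Finset (Fin 6)) ∈ Hfaces)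
    (t : unitInterval) : (segPath i j hij hf t).1 = seg i j t := rfl

end Seg

section Embedding

lemma unit_mem_Ioo {t : unitInterval} (ht : t ∈ Ioo (0 : unitInterval) 1) :
    (t : ℝ) ∈ Ioo (0:ℝ) 1 :=
  ⟨by exact_mod_cast ht.1, by exact_mod_cast ht.2⟩

lemma seg_eq_analysis {i j i' j' : Fin 6} {t t' : ℝ} (hij : i ≠ j) (hij' : i' ≠ j')
    (ht : t ∈ Ioo (0:ℝ) 1) (ht' : t' ∈ Ioo (0:ℝ) 1)
    (h : seg i j t = seg i' j' t') : (i = i' ∨ i = j') ∧ (j = i' ∨ j = j') := by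
  constructor
  · by_contra hc
    push_neg at hc
    have hh := congrFun h i
    rw [seg_self i j hij, seg_zero' hc.1 hc.2] at hh
    linarith [ht.2]
  · by_contra hc
    push_neg at hc
    have hh := congrFun h j
    rw [seg_other i j hij, seg_zero' hc.1 hc.2] at hh
    linarith [ht.1]

/-- The embedding of `Gr` into the H-shaped complex. -/
def GrEmb : GraphEmb Gr ↥Hcx.space where
  vmap := vert
  emap := fun e => segPath (Gends e).1 (Gends e).2 (Gr_ends_ne e) (Gr_ends_face e)
  vmap_injective := vert_injective
  emap_injOn := by
    intro e t ht t' ht' h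
    have hv := congrArg Subtype.val h
    rw [segPath_coe, segPath_coe] at hv
    have := congrFun hv (Gends e).2
    rw [seg_other _ _ (Gr_ends_ne e), seg_other _ _ (Gr_ends_ne e)] at this
    exact Subtype.ext this
  emap_disjoint := by
    intro e e' hne t ht t' ht' h
    have hv := congrArg Subtype.val h
    rw [segPath_coe, segPath_coe] at hv
    have h12 := seg_eq_analysis (Gr_ends_ne e) (Gr_ends_ne e')
      (unit_mem_Ioo ht) (unit_mem_Ioo ht') hv
    have key : ∀ e e' : Fin 5, e ≠ e' →
        (((Gends e).1 = (Gends e').1 ∨ (Gends e).1 = (Gends e').2) ∧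
         ((Gends e).2 = (Gends e').1 ∨ (Gends e).2 = (Gends e').2)) → False := by decide
    exact key e e' hne h12
  emap_avoid := by
    intro e t ht v h
    have hv := congrArg Subtype.val h
    rw [segPath_coe] at hv
    have hc := congrFun hv v
    have hvv : (vert v).1 v = 1 := by simp [vert]
    rw [hvv] at hc
    have h0 := unit_mem_Ioo ht
    set i := (Gends e).1
    set j := (Gends e).2
    by_cases hvi : v = i
    · subst hvi
      rw [seg_self _ _ (Gr_ends_ne e)] at hc
      linarith [h0.1]
    · by_cases hvj : v = j
      · subst hvj
        rw [seg_other _ _ (Gr_ends_ne e)] at hc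
        linarith [h0.2]
      · rw [seg_zero' hvi hvj] at hc
        linarith

end Embedding

section Contraction

lemma Gr_contract : IsEdgeContraction Gr Gr' := by
  refine ⟨(0 : Fin 5), (![1,2,0,0,3,4] : Fin 6 → Fin 5),
    fun e => (![0,0,1,2,3] : Fin 5 → Fin 4) e.1, ?_, ?_, ?_, ?_⟩
  · have key : Function.Surjective (![1,2,0,0,3,4] : Fin 6 → Fin 5) := by decide
    exact key
  · have key : Function.Bijective
        (fun e : {e : Fin 5 // e ≠ 0} => (![0,0,1,2,3] : Fin 5 → Fin 4) e.1) := by decide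
    exact key
  · have key : ∀ x y : Fin 6, (![1,2,0,0,3,4] : Fin 6 → Fin 5) x = ![1,2,0,0,3,4] y ↔
        (x = y ∨ (x = 2 ∧ y = 3 ∨ x = 3 ∧ y = 2)) := by decide
    intro x y
    show _ ↔ _ ∨ ({x, y} : Set (Fin 6)) = {2, 3}
    rw [Set.pair_eq_pair_iff]
    exact key x y
  · have key : ∀ e : {e : Fin 5 // e ≠ 0},
        ((0, ((![0,0,1,2,3] : Fin 5 → Fin 4) e.1).succ) : Fin 5 × Fin 5) =
          ((![1,2,0,0,3,4] : Fin 6 → Fin 5) (Gends e.1).1,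
           (![1,2,0,0,3,4] : Fin 6 → Fin 5) (Gends e.1).2) := by decide
    exact key

end Contraction

section Topology

lemma subset_single {X : Type*} [TopologicalSpace X] {M : Type*} {J : M → Set X}
    (hopen : ∀ m, IsOpen (J m))
    (hdisj : ∀ m m', m ≠ m' → ∀ x, x ∈ J m → x ∈ J m' → False)
    {A : Set X} (hA : IsPreconnected A) (hsub : A ⊆ ⋃ m, J m) (hne : A.Nonempty) :
    ∃ m, A ⊆ J m := by
  obtain ⟨a, ha⟩ := hne
  obtain ⟨m₀, hm₀⟩ := mem_iUnion.mp (hsub ha)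
  refine ⟨m₀, ?_⟩
  have hv : IsOpen (⋃ m ∈ {m' | m' ≠ m₀}, J m) := isOpen_biUnion (fun m _ => hopen m)
  have hd : Disjoint (J m₀) (⋃ m ∈ {m' | m' ≠ m₀}, J m) := by
    rw [Set.disjoint_iUnion₂_right]
    intro m hm
    rw [Set.disjoint_left]
    exact fun x hx hx' => hdisj m₀ m (Ne.symm hm) x hx hx'
  refine IsPreconnected.subset_left_of_subset_union (hopen m₀) hv hd ?_ ⟨a, ha, hm₀⟩ hA
  intro x hx
  obtain ⟨m, hm⟩ := mem_iUnion.mp (hsub hx)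
  by_cases h : m = m₀
  · exact Or.inl (h ▸ hm)
  · exact Or.inr (mem_biUnion h hm)

lemma workhorse {X : Type*} [TopologicalSpace X] {u : X → ℝ} (hu : Continuous u)
    {J : Set X} (hpos : ∀ x ∈ J, 0 < u x) (hinj : Set.InjOn u J)
    {p : X} (hp : u p = 0) {F G : ℝ → X} (hF : Continuous F) (hG : Continuous G)
    (hF0 : F 0 = p) (hG0 : G 0 = p) {δ δ' : ℝ} (hδ : 0 < δ) (hδ' : 0 < δ')
    (hFJ : ∀ t ∈ Set.Ioc (0:ℝ) δ, F t ∈ J) (hGJ : ∀ t ∈ Set.Ioc (0:ℝ) δ', G t ∈ J) :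
    ∃ s ∈ Set.Ioc (0:ℝ) δ, ∃ s' ∈ Set.Ioc (0:ℝ) δ', F s = G s' := by
  set c := min (u (F δ)) (u (G δ')) with hc
  have hFδ : F δ ∈ J := hFJ δ ⟨hδ, le_refl _⟩
  have hGδ : G δ' ∈ J := hGJ δ' ⟨hδ', le_refl _⟩
  have hcpos : 0 < c := lt_min (hpos _ hFδ) (hpos _ hGδ)
  have h1 : c ∈ Icc ((u ∘ F) 0) ((u ∘ F) δ) := by
    constructor
    · simp [hF0, hp, hcpos.le]
    · exact min_le_left _ _
  have h2 : c ∈ Icc ((u ∘ G) 0) ((u ∘ G) δ') := by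
    constructor
    · simp [hG0, hp, hcpos.le]
    · exact min_le_right _ _
  obtain ⟨s, hs, hsc⟩ := intermediate_value_Icc hδ.le ((hu.comp hF).continuousOn) h1
  obtain ⟨s', hs', hsc'⟩ := intermediate_value_Icc hδ'.le ((hu.comp hG).continuousOn) h2
  have hs0 : s ≠ 0 := by
    intro h
    rw [h] at hsc
    simp [hF0, hp] at hsc
    exact absurd hsc.symm hcpos.ne'
  have hs'0 : s' ≠ 0 := by
    intro h
    rw [h] at hsc'
    simp [hG0, hp] at hsc'
    exact absurd hsc'.symm hcpos.ne'
  refine ⟨s, ⟨lt_of_le_of_ne hs.1 (Ne.symm hs0), hs.2⟩,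
    s', ⟨lt_of_le_of_ne hs'.1 (Ne.symm hs'0), hs'.2⟩, ?_⟩
  apply hinj (hFJ s ⟨lt_of_le_of_ne hs.1 (Ne.symm hs0), hs.2⟩)
    (hGJ s' ⟨lt_of_le_of_ne hs'.1 (Ne.symm hs'0), hs'.2⟩)
  show u (F s) = u (G s')
  rw [show u (F s) = c from hsc, show u (G s') = c from hsc']

end Topology

section LocalStructure

lemma two_sum_le_one {x : Fin 6 → ℝ} (hx : x ∈ Hcx.space) {a b : Fin 6} (hab : a ≠ b) :
    x a + x b ≤ 1 := by
  have h : ∑ k ∈ ({a, b} : Finset (Fin 6)), x k ≤ ∑ k, x k :=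
    Finset.sum_le_sum_of_subset_of_nonneg (Finset.subset_univ _) (fun i _ _ => hx.1 i)
  rw [Finset.sum_pair hab] at h
  have h1 : (∑ k : Fin 6, x k) = 1 := hx.2.1
  rw [h1] at h
  exact h

lemma coord_one {x : Fin 6 → ℝ} (hx : x ∈ Hcx.space) {k : Fin 6}
    (hz : ∀ w, w ≠ k → x w = 0) : x k = 1 := by
  have h := hx.2.1
  rw [← h]
  exact (Finset.sum_eq_single_of_mem k (Finset.mem_univ k) (fun b _ hb => hz b hb)).symm

lemma coord_dist (x p : ↥Hcx.space) (i : Fin 6) : dist (x.1 i) (p.1 i) ≤ dist x p := by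
  rw [Subtype.dist_eq]
  exact dist_le_pi_dist x.1 p.1 i

lemma coord_cont (i : Fin 6) : Continuous (fun q : ↥Hcx.space => q.1 i) :=
  (continuous_apply i).comp continuous_subtype_val

lemma nbr_card : ∀ k : Fin 6,
    Fintype.card {w : Fin 6 // w ≠ k ∧ ({k, w} : Finset (Fin 6)) ∈ Hfaces} < 4 := by decide

lemma local_structure (p : ↥Hcx.space) :
    ∃ (M : Type) (inst : Fintype M) (J : M → Set ↥Hcx.space) (u : M → ↥Hcx.space → ℝ)
      (ε : ℝ), @Fintype.card M inst < 4 ∧ 0 < ε ∧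
      (∀ m, IsOpen (J m)) ∧
      (∀ m m', m ≠ m' → ∀ x, x ∈ J m → x ∈ J m' → False) ∧
      (∀ m, Continuous (u m)) ∧ (∀ m, u m p = 0) ∧
      (∀ m, ∀ x ∈ J m, 0 < u m x) ∧ (∀ m, Set.InjOn (u m) (J m)) ∧
      (∀ x : ↥Hcx.space, x ≠ p → dist x p < ε → ∃ m, x ∈ J m) := by
  have hpk : ∃ k, p.1 k ≠ 0 := by
    by_contra h
    push_neg at h
    have := p.2.2.1
    rw [Finset.sum_eq_zero (fun k _ => h k)] at this
    norm_num at this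
  obtain ⟨k, hk⟩ := hpk
  have hpk0 : 0 < p.1 k := lt_of_le_of_ne (p.2.1 k) (Ne.symm hk)
  by_cases hB : ∃ b, b ≠ k ∧ p.1 b ≠ 0
  · -- p is in the interior of a segment {k, b}
    obtain ⟨b, hbk, hb⟩ := hB
    have hpb0 : 0 < p.1 b := lt_of_le_of_ne (p.2.1 b) (Ne.symm hb)
    have hab : k ≠ b := Ne.symm hbk
    have hz := zero_of_two_pos p.2 hab hpk0 hpb0
    have hsum : p.1 k + p.1 b = 1 := sum_two p.2 hab hz
    refine ⟨Bool, inferInstance,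
      (fun m => cond m {q : ↥Hcx.space | p.1 b < q.1 b ∧ 0 < q.1 k}
        {q : ↥Hcx.space | p.1 k < q.1 k ∧ 0 < q.1 b}),
      (fun m => cond m (fun q => q.1 b - p.1 b) (fun q => q.1 k - p.1 k)),
      min (p.1 k) (p.1 b), by simp, lt_min hpk0 hpb0, ?_, ?_, ?_, ?_, ?_, ?_, ?_⟩
    · intro m
      cases m
      · exact ((isOpen_Ioi).preimage (coord_cont k)).inter ((isOpen_Ioi).preimage (coord_cont b))
      · exact ((isOpen_Ioi).preimage (coord_cont b)).inter ((isOpen_Ioi).preimage (coord_cont k))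
    · intro m m' hmm' x hx hx'
      cases m <;> cases m'
      · exact hmm' rfl
      · have := two_sum_le_one x.2 hab
        have h1 : p.1 k < x.1 k := hx.1
        have h2 : p.1 b < x.1 b := hx'.1
        linarith
      · have := two_sum_le_one x.2 hab
        have h1 : p.1 k < x.1 k := hx'.1
        have h2 : p.1 b < x.1 b := hx.1
        linarith
      · exact hmm' rfl
    · intro m
      cases m
      · exact (coord_cont k).sub continuous_const
      · exact (coord_cont b).sub continuous_const
    · intro m; cases m <;> simp
    · intro m x hx
      cases m
      · exact sub_pos.mpr hx.1
      · exact sub_pos.mpr hx.1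
    · intro m
      cases m
      · intro q hq q' hq' h
        have hqk : q.1 k = q'.1 k := by
          have : q.1 k - p.1 k = q'.1 k - p.1 k := h
          linarith
        exact Subtype.ext (eq_of_coord q.2 q'.2 hbk hq.2 (hpk0.trans hq.1)
          hq'.2 (hpk0.trans hq'.1) hqk)
      · intro q hq q' hq' h
        have hqb : q.1 b = q'.1 b := by
          have : q.1 b - p.1 b = q'.1 b - p.1 b := h
          linarith
        exact Subtype.ext (eq_of_coord q.2 q'.2 hab hq.2 (hpb0.trans hq.1)
          hq'.2 (hpb0.trans hq'.1) hqb)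
    · intro x hxp hdist
      have hdk := (coord_dist x p k).trans_lt hdist
      have hdb := (coord_dist x p b).trans_lt hdist
      rw [Real.dist_eq, abs_lt] at hdk hdb
      have hxk : 0 < x.1 k := by
        have := min_le_left (p.1 k) (p.1 b)
        linarith [hdk.1]
      have hxb : 0 < x.1 b := by
        have := min_le_right (p.1 k) (p.1 b)
        linarith [hdb.1]
      have hzx := zero_of_two_pos x.2 hab hxk hxb
      have hsx : x.1 k + x.1 b = 1 := sum_two x.2 hab hzx
      have hne : x.1 k ≠ p.1 k := by
        intro h
        apply hxp
        apply Subtype.ext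
        funext w
        by_cases hwk : w = k
        · rw [hwk, h]
        · by_cases hwb : w = b
          · rw [hwb]; linarith
          · rw [hzx w hwk hwb, hz w hwk hwb]
      rcases lt_or_gt_of_ne hne with hlt | hgt
      · exact ⟨true, by constructor <;> [linarith; exact hxk]⟩
      · exact ⟨false, ⟨hgt, hxb⟩⟩
  · -- p is the vertex k
    push_neg at hB
    have pk1 : p.1 k = 1 := coord_one p.2 hB
    refine ⟨{w : Fin 6 // w ≠ k ∧ ({k, w} : Finset (Fin 6)) ∈ Hfaces}, inferInstance,
      (fun m => {q : ↥Hcx.space | 1/2 < q.1 k ∧ 0 < q.1 m.1}),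
      (fun m q => q.1 m.1), 1/2, nbr_card k, by norm_num, ?_, ?_, ?_, ?_, ?_, ?_, ?_⟩
    · intro m
      exact ((isOpen_Ioi).preimage (coord_cont k)).inter ((isOpen_Ioi).preimage (coord_cont m.1))
    · intro m m' hmm' x hx hx'
      have hww : m.1 ≠ m'.1 := fun h => hmm' (Subtype.ext h)
      exact no_three_pos x.2 (Ne.symm m.2.1) (Ne.symm m'.2.1) hww
        (by linarith [hx.1] : x.1 k ≠ 0) hx.2.ne' hx'.2.ne'
    · intro m
      exact coord_cont m.1
    · intro m
      exact hB m.1 m.2.1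
    · intro m x hx
      exact hx.2
    · intro m q hq q' hq' h
      exact Subtype.ext (eq_of_coord q.2 q'.2 (Ne.symm m.2.1) (by linarith [hq.1])
        hq.2 (by linarith [hq'.1]) hq'.2 h)
    · intro x hxp hdist
      have hdk := (coord_dist x p k).trans_lt hdist
      rw [Real.dist_eq, abs_lt, pk1] at hdk
      have hxk : 1/2 < x.1 k := by linarith [hdk.1]
      have hw : ∃ w, w ≠ k ∧ x.1 w ≠ 0 := by
        by_contra h
        push_neg at h
        apply hxp
        apply Subtype.ext
        funext w
        by_cases hwk : w = k
        · rw [hwk, coord_one x.2 h, pk1]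
        · rw [h w hwk, hB w hwk]
      obtain ⟨w, hwk, hxw⟩ := hw
      have hface : ({k, w} : Finset (Fin 6)) ∈ Hfaces :=
        pair_mem_faces x.2 (Ne.symm hwk) (by linarith : x.1 k ≠ 0) hxw
      exact ⟨⟨w, hwk, hface⟩, hxk, lt_of_le_of_ne (x.2.1 w) (Ne.symm hxw)⟩

end LocalStructure

section NoEmb

lemma mk_mem_Ioo {t : ℝ} (h0 : 0 < t) (h1 : t < 1) :
    (⟨t, ⟨h0.le, h1.le⟩⟩ : unitInterval) ∈ Ioo (0 : unitInterval) 1 := by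
  constructor
  · exact Subtype.mk_lt_mk.mpr h0
  · exact Subtype.mk_lt_mk.mpr h1

lemma Gr'_not_embeddable : ¬ Nonempty (GraphEmb Gr' ↥Hcx.space) := by
  rintro ⟨Γ⟩
  let v0 : Gr'.V := (0 : Fin 5)
  set p := Γ.vmap v0 with hpdef
  obtain ⟨M, instM, J, u, ε, hcard, hε, hopen, hdisj, hucont, hup, hupos, huinj, hcover⟩ :=
    local_structure p
  haveI := instM
  let F : Fin 4 → ℝ → ↥Hcx.space := fun i => (Γ.emap i).extend
  have hF0 : ∀ i : Fin 4, F i 0 = p := fun i => Path.extend_zero _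
  have key : ∀ i : Fin 4, ∃ (m : M) (δ : ℝ), 0 < δ ∧ δ < 1 ∧
      ∀ t ∈ Set.Ioc (0:ℝ) δ, F i t ∈ J m := by
    intro i
    have hc : ContinuousAt (F i) 0 := (Γ.emap i).continuous_extend.continuousAt
    rw [Metric.continuousAt_iff] at hc
    obtain ⟨δ₀, hδ₀, hδ⟩ := hc ε hε
    have hδpos : (0:ℝ) < min (δ₀/2) (1/2) := lt_min (by linarith) (by norm_num)
    have hδlt1 : min (δ₀/2) (1/2) < 1 := lt_of_le_of_lt (min_le_right _ _) (by norm_num)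
    have hmem : ∀ t ∈ Set.Ioc (0:ℝ) (min (δ₀/2) (1/2)), F i t ∈ ⋃ m, J m := by
      intro t ht
      have ht01 : t ∈ Icc (0:ℝ) 1 := ⟨ht.1.le, le_trans ht.2 hδlt1.le⟩
      have htl : t < 1 := lt_of_le_of_lt ht.2 hδlt1
      have hdist : dist (F i t) p < ε := by
        have hd : dist t (0:ℝ) < δ₀ := by
          rw [Real.dist_eq, sub_zero, abs_of_pos ht.1]
          have := ht.2
          have := min_le_left (δ₀/2) (1/2)
          linarith
        have := hδ hd
        rwa [hF0 i] at this
      have hne : F i t ≠ p := by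
        show (Γ.emap i).extend t ≠ p
        rw [Path.extend_apply _ ht01]
        exact Γ.emap_avoid i ⟨t, ht01⟩ (mk_mem_Ioo ht.1 htl) v0
      obtain ⟨m, hm⟩ := hcover _ hne hdist
      exact mem_iUnion.mpr ⟨m, hm⟩
    have hpre : IsPreconnected (F i '' Set.Ioc 0 (min (δ₀/2) (1/2))) :=
      (isPreconnected_Ioc).image _ ((Γ.emap i).continuous_extend.continuousOn)
    obtain ⟨m, hm⟩ := subset_single hopen hdisj hpre
      (by rintro _ ⟨t, ht, rfl⟩; exact hmem t ht)
      ⟨F i (min (δ₀/2) (1/2)), ⟨min (δ₀/2) (1/2), ⟨hδpos, le_refl _⟩, rfl⟩⟩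
    exact ⟨m, min (δ₀/2) (1/2), hδpos, hδlt1, fun t ht => hm ⟨t, ht, rfl⟩⟩
  choose mfn δfn hδpos hδlt hmem using key
  obtain ⟨i, j, hij, hmij⟩ := @Fintype.exists_ne_map_eq_of_card_lt (Fin 4) M _ instM mfn
    (by rw [Fintype.card_fin]; exact hcard)
  obtain ⟨s, hs, s', hs', heq⟩ := workhorse (hucont (mfn i)) (hupos (mfn i)) (huinj (mfn i))
    (hup (mfn i)) ((Γ.emap i).continuous_extend) ((Γ.emap j).continuous_extend)
    (hF0 i) (hF0 j) (hδpos i) (hδpos j) (hmem i)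
    (fun t ht => hmij ▸ hmem j t ht)
  have hs01 : s ∈ Icc (0:ℝ) 1 := ⟨hs.1.le, (hs.2.trans_lt (hδlt i)).le⟩
  have hs'01 : s' ∈ Icc (0:ℝ) 1 := ⟨hs'.1.le, (hs'.2.trans_lt (hδlt j)).le⟩
  have heq' : (Γ.emap i) ⟨s, hs01⟩ = (Γ.emap j) ⟨s', hs'01⟩ := by
    rw [← Path.extend_apply _ hs01, ← Path.extend_apply _ hs'01]
    exact heq
  exact Γ.emap_disjoint i j hij ⟨s, hs01⟩
    (mk_mem_Ioo hs.1 (hs.2.trans_lt (hδlt i)))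
    ⟨s', hs'01⟩ (mk_mem_Ioo hs'.1 (hs'.2.trans_lt (hδlt j))) heq'

end NoEmb

/-- The class of graphs embeddable into a fixed 2-complex is not
minor-closed: there are a 2-complex `C` and a graph `G` embeddable into `C` such that
contracting a single edge of `G` yields a graph not embeddable into `C`. -/
theorem embeddable_not_minor_closed :
    ∃ (C : TwoComplex) (G : FinGraph), Nonempty (GraphEmb G (↥C.space)) ∧
      ∃ G' : FinGraph, IsEdgeContraction G G' ∧ ¬ Nonempty (GraphEmb G' (↥C.space)) := by
  exact ⟨Hcx, Gr, ⟨GrEmb⟩, Gr', Gr_contract, Gr'_not_embeddable⟩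
end

section
/- In a 2-complex without 3-books, the set of segments and triangles incident with any given node p is uniquely partitioned into cones, corners, and isolated segments at p. -/
open Classical in
/-- The segments and triangles of `C` incident with the node `p`. -/
noncomputable def segsAndTrisAt (C : TwoComplex) (p : Fin C.n) : Finset (Finset (Fin C.n)) :=
  C.faces.filter fun s => p ∈ s ∧ 2 ≤ s.card

/-- A cone at `p`: a cyclic sequence of triangles incident to `p`, consecutive ones
sharing a segment incident with `p`, any other pair meeting exactly in `p`. -/
def IsConeAt (C : TwoComplex) (p : Fin C.n) (T : Finset (Finset (Fin C.n))) : Prop :=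
  ∃ (k : ℕ) (f : ZMod k → Finset (Fin C.n)), 0 < k ∧ Function.Injective f ∧
    (∀ i, f i ∈ T) ∧ (∀ s ∈ T, ∃ i, f i = s) ∧
    (∀ i, f i ∈ C.faces ∧ (f i).card = 3 ∧ p ∈ f i) ∧
    (∀ i : ZMod k, ∃ q, q ≠ p ∧ q ∈ f i ∧ q ∈ f (i + 1)) ∧
    (∀ i j : ZMod k, i ≠ j → j ≠ i + 1 → i ≠ j + 1 → f i ∩ f j = {p})

/-- A fan at `p`: a linear sequence of triangles incident to `p`, consecutive ones
sharing a segment incident with `p`, any other pair meeting exactly in `p`. -/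
def IsFanAt (C : TwoComplex) (p : Fin C.n) (T : Finset (Finset (Fin C.n))) : Prop :=
  ∃ (k : ℕ) (f : Fin k → Finset (Fin C.n)), 0 < k ∧ Function.Injective f ∧
    (∀ i, f i ∈ T) ∧ (∀ s ∈ T, ∃ i, f i = s) ∧
    (∀ i, f i ∈ C.faces ∧ (f i).card = 3 ∧ p ∈ f i) ∧
    (∀ i : Fin k, ∀ h : (i : ℕ) + 1 < k, ∃ q, q ≠ p ∧ q ∈ f i ∧ q ∈ f ⟨(i : ℕ) + 1, h⟩) ∧
    (∀ i j : Fin k, i ≠ j → (j : ℕ) ≠ (i : ℕ) + 1 → (i : ℕ) ≠ (j : ℕ) + 1 →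
      f i ∩ f j = {p})

/-- A corner at `p`: an inclusionwise maximal fan at `p`. -/
def IsCornerAt (C : TwoComplex) (p : Fin C.n) (T : Finset (Finset (Fin C.n))) : Prop :=
  IsFanAt C p T ∧ ∀ T', T ⊂ T' → ¬ IsFanAt C p T'

/-- An isolated segment at `p`: a segment containing `p` contained in no triangle. -/
def IsIsolatedSegAt (C : TwoComplex) (p : Fin C.n) (s : Finset (Fin C.n)) : Prop :=
  s ∈ C.faces ∧ p ∈ s ∧ s.card = 2 ∧ ∀ t ∈ C.faces, ¬ s ⊂ t

open Classical in
/-- The segments incident to `p` contained in some triangle of `T`. -/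
noncomputable def segsOf (C : TwoComplex) (p : Fin C.n) (T : Finset (Finset (Fin C.n))) :
    Finset (Finset (Fin C.n)) :=
  C.faces.filter fun s => s.card = 2 ∧ p ∈ s ∧ ∃ t ∈ T, s ⊆ t

/-- A block at `p`: either a single isolated segment, or the triangles of a cone or a
corner at `p` together with their segments incident to `p`. -/
def IsBlockAt (C : TwoComplex) (p : Fin C.n) (B : Finset (Finset (Fin C.n))) : Prop :=
  (∃ s, IsIsolatedSegAt C p s ∧ B = {s}) ∨
  (∃ T, IsConeAt C p T ∧ B = T ∪ segsOf C p T) ∨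
  (∃ T, IsCornerAt C p T ∧ B = T ∪ segsOf C p T)

/-- A node is regular when all incident segments and triangles form a single cone or
corner; otherwise it is singular. -/
def IsRegularNode (C : TwoComplex) (p : Fin C.n) : Prop :=
  ∃ T, (IsConeAt C p T ∨ IsCornerAt C p T) ∧ segsAndTrisAt C p = T ∪ segsOf C p T

def IsSingularNode (C : TwoComplex) (p : Fin C.n) : Prop := ¬ IsRegularNode C p


namespace CCB

open Classical in
noncomputable def TriAt (C : TwoComplex) (p : Fin C.n) : Finset (Finset (Fin C.n)) :=
  C.faces.filter fun t => p ∈ t ∧ t.card = 3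

lemma mem_TriAt {C : TwoComplex} {p : Fin C.n} {t : Finset (Fin C.n)} :
    t ∈ TriAt C p ↔ t ∈ C.faces ∧ p ∈ t ∧ t.card = 3 := by
  simp [TriAt]

def AdjAt (C : TwoComplex) (p : Fin C.n) (t t' : Finset (Fin C.n)) : Prop :=
  t ∈ TriAt C p ∧ t' ∈ TriAt C p ∧ t ≠ t' ∧ ∃ q, q ≠ p ∧ q ∈ t ∧ q ∈ t'

lemma adjAt_symm {C : TwoComplex} {p : Fin C.n} {t t' : Finset (Fin C.n)}
    (h : AdjAt C p t t') : AdjAt C p t' t := by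
  obtain ⟨h1, h2, h3, q, hq, hq1, hq2⟩ := h
  exact ⟨h2, h1, h3.symm, q, hq, hq2, hq1⟩

def RelAt (C : TwoComplex) (p : Fin C.n) : Finset (Fin C.n) → Finset (Fin C.n) → Prop :=
  Relation.ReflTransGen (AdjAt C p)

lemma relAt_symm {C : TwoComplex} {p : Fin C.n} {t t' : Finset (Fin C.n)}
    (h : RelAt C p t t') : RelAt C p t' t :=
  (@Relation.ReflTransGen.stdSymm _ _ ⟨fun _ _ h => adjAt_symm h⟩).symm _ _ h

lemma no3_aux {C : TwoComplex} {p : Fin C.n} (h3 : ¬ C.HasThreeBook)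
    {t₁ t₂ t₃ : Finset (Fin C.n)} (h1 : t₁ ∈ TriAt C p) (h2 : t₂ ∈ TriAt C p)
    (h3' : t₃ ∈ TriAt C p) (h12 : t₁ ≠ t₂) (h13 : t₁ ≠ t₃) (h23 : t₂ ≠ t₃)
    {q : Fin C.n} (hq : q ≠ p) (hq1 : q ∈ t₁) (hq2 : q ∈ t₂) (hq3 : q ∈ t₃) : False := by
  rw [mem_TriAt] at h1 h2 h3'
  apply h3
  refine ⟨t₁, h1.1, t₂, h2.1, t₃, h3'.1, h12, h13, h23, h1.2.2, h2.2.2, h3'.2.2,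
    {p, q}, ?_, ?_, ?_, ?_⟩
  · rw [Finset.card_insert_of_notMem (by simp [Ne.symm hq]), Finset.card_singleton]
  · exact Finset.insert_subset h1.2.1 (Finset.singleton_subset_iff.2 hq1)
  · exact Finset.insert_subset h2.2.1 (Finset.singleton_subset_iff.2 hq2)
  · exact Finset.insert_subset h3'.2.1 (Finset.singleton_subset_iff.2 hq3)

lemma two_nbrs {C : TwoComplex} {p : Fin C.n} (h3 : ¬ C.HasThreeBook)
    {t a b c : Finset (Fin C.n)} (hab : a ≠ b)
    (ha : AdjAt C p t a) (hb : AdjAt C p t b) (hc : AdjAt C p t c) :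
    c = a ∨ c = b := by
  obtain ⟨ht, hat, hta, qa, hqa, hqat, hqaa⟩ := ha
  obtain ⟨-, hbt, htb, qb, hqb, hqbt, hqbb⟩ := hb
  obtain ⟨-, hct, htc, qc, hqc, hqct, hqcc⟩ := hc
  -- qa ≠ qb
  have hqab : qa ≠ qb := by
    rintro rfl
    exact no3_aux h3 ht hat hbt hta htb hab hqa hqat hqaa hqbb
  -- all in t.erase p, which has card 2
  have hcard : (t.erase p).card = 2 := by
    rw [Finset.card_erase_of_mem (mem_TriAt.1 ht).2.1, (mem_TriAt.1 ht).2.2]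
  have hma : qa ∈ t.erase p := Finset.mem_erase.2 ⟨hqa, hqat⟩
  have hmb : qb ∈ t.erase p := Finset.mem_erase.2 ⟨hqb, hqbt⟩
  have hmc : qc ∈ t.erase p := Finset.mem_erase.2 ⟨hqc, hqct⟩
  have : qc = qa ∨ qc = qb := by
    by_contra h
    push_neg at h
    have : ({qc, qa, qb} : Finset (Fin C.n)) ⊆ t.erase p := by
      intro x hx; simp at hx; rcases hx with rfl | rfl | rfl <;> assumption
    have hle := Finset.card_le_card this
    rw [Finset.card_insert_of_notMem (by simp [h.1, h.2]),
      Finset.card_insert_of_notMem (by simp [hqab]), Finset.card_singleton, hcard] at hle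
    omega
  rcases this with rfl | rfl
  · left
    by_contra hne
    exact no3_aux h3 ht hct hat htc hta hne hqc hqct hqcc hqaa
  · right
    by_contra hne
    exact no3_aux h3 ht hct hbt htc htb hne hqc hqct hqcc hqbb


variable {C : TwoComplex} {p : Fin C.n}

lemma chain_head_rel : ∀ (l : List (Finset (Fin C.n))) (a : Finset (Fin C.n)),
    List.Chain' (AdjAt C p) (a :: l) → ∀ x ∈ a :: l, RelAt C p a x := by
  intro l
  induction l with
  | nil => intro a _ x hx; simp at hx; subst hx; exact Relation.ReflTransGen.refl
  | cons b l ih =>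
    intro a hch x hx
    replace hch := List.isChain_cons_cons.1 hch
    rcases List.mem_cons.1 hx with rfl | hx
    · exact Relation.ReflTransGen.refl
    · exact Relation.ReflTransGen.trans (Relation.ReflTransGen.single hch.1) (ih b hch.2 x hx)

lemma chain_rel_mem {l : List (Finset (Fin C.n))} (hch : List.Chain' (AdjAt C p) l)
    {x y : Finset (Fin C.n)} (hx : x ∈ l) (hy : y ∈ l) : RelAt C p x y := by
  cases l with
  | nil => simp at hx
  | cons a l =>
    exact Relation.ReflTransGen.trans (relAt_symm (chain_head_rel l a hch x hx))
      (chain_head_rel l a hch y hy)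

/-- extend a nodup chain at its head until all neighbours of the head are in the list -/
lemma extend_head : ∀ (n : ℕ) (a : Finset (Fin C.n)) (l : List (Finset (Fin C.n))),
    (a :: l).Nodup → List.Chain' (AdjAt C p) (a :: l) → (∀ x ∈ a :: l, x ∈ TriAt C p) →
    (TriAt C p).card - (a :: l).length ≤ n →
    ∃ (b : Finset (Fin C.n)) (m : List (Finset (Fin C.n))),
      (b :: m).Nodup ∧ List.Chain' (AdjAt C p) (b :: m) ∧
      (∀ x ∈ b :: m, x ∈ TriAt C p) ∧ (a :: l) <:+ (b :: m) ∧
      (∀ t', AdjAt C p b t' → t' ∈ b :: m) := by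
  intro n
  induction n with
  | zero =>
    intro a l hnd hch htri hn
    by_cases h : ∃ t', AdjAt C p a t' ∧ t' ∉ a :: l
    · exfalso
      obtain ⟨t', ht', hmem⟩ := h
      have hnd' : (t' :: a :: l).Nodup := List.nodup_cons.2 ⟨hmem, hnd⟩
      have hsub : ∀ x ∈ t' :: a :: l, x ∈ TriAt C p := by
        intro x hx
        rcases List.mem_cons.1 hx with rfl | hx
        · exact ht'.2.1
        · exact htri x hx
      have hlen : (t' :: a :: l).length ≤ (TriAt C p).card := by
        classical
        have : (t' :: a :: l).toFinset ⊆ TriAt C p := fun x hx => hsub x (List.mem_toFinset.1 hx)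
        have := Finset.card_le_card this
        rwa [List.toFinset_card_of_nodup hnd'] at this
      simp only [List.length_cons] at hlen hn
      omega
    · push_neg at h
      exact ⟨a, l, hnd, hch, htri, List.suffix_refl _, fun t' hA => h t' hA⟩
  | succ n ih =>
    intro a l hnd hch htri hn
    by_cases h : ∃ t', AdjAt C p a t' ∧ t' ∉ a :: l
    · obtain ⟨t', ht', hmem⟩ := h
      have hnd' : (t' :: a :: l).Nodup := List.nodup_cons.2 ⟨hmem, hnd⟩
      have hch' : List.Chain' (AdjAt C p) (t' :: a :: l) :=
        List.isChain_cons_cons.2 ⟨adjAt_symm ht', hch⟩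
      have htri' : ∀ x ∈ t' :: a :: l, x ∈ TriAt C p := by
        intro x hx
        rcases List.mem_cons.1 hx with rfl | hx
        · exact ht'.2.1
        · exact htri x hx
      have hn' : (TriAt C p).card - (t' :: a :: l).length ≤ n := by
        simp only [List.length_cons] at hn ⊢
        omega
      obtain ⟨b, m, h1, h2, h3, h4, h5⟩ := ih t' (a :: l) hnd' hch' htri' hn'
      exact ⟨b, m, h1, h2, h3, (List.suffix_cons _ _).trans h4, h5⟩
    · push_neg at h
      exact ⟨a, l, hnd, hch, htri, List.suffix_refl _, fun t' hA => h t' hA⟩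

/-- for every triangle there is a maximal nodup chain through it, closed at both ends -/
lemma exists_max_chain (t0 : Finset (Fin C.n)) (ht0 : t0 ∈ TriAt C p) :
    ∃ L : List (Finset (Fin C.n)), ∃ hL : L ≠ [],
      L.Nodup ∧ List.Chain' (AdjAt C p) L ∧ (∀ x ∈ L, x ∈ TriAt C p) ∧ t0 ∈ L ∧
      (∀ t', AdjAt C p (L.head hL) t' → t' ∈ L) ∧
      (∀ t', AdjAt C p (L.getLast hL) t' → t' ∈ L) := by
  obtain ⟨b, m, h1, h2, h3, h4, h5⟩ := extend_head ((TriAt C p).card) t0 []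
    (by simp) (List.isChain_singleton _) (by simpa using ht0) (by simp)
  -- now extend the reverse at its head
  have hchr : List.Chain' (AdjAt C p) (b :: m).reverse :=
    List.isChain_reverse.2 (List.IsChain.imp (fun x y h => adjAt_symm h) h2)
  obtain ⟨c, w, hw⟩ : ∃ c w, (b :: m).reverse = c :: w := by
    rcases h : (b :: m).reverse with _ | ⟨c, w⟩
    · exfalso; have := congrArg List.length h; simp at this
    · exact ⟨c, w, rfl⟩
  rw [hw] at hchr
  have hndr : (c :: w).Nodup := by rw [← hw]; exact List.nodup_reverse.2 h1
  have htrir : ∀ x ∈ c :: w, x ∈ TriAt C p := by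
    intro x hx; rw [← hw] at hx; exact h3 x (List.mem_reverse.1 hx)
  obtain ⟨d, u, g1, g2, g3, g4, g5⟩ := extend_head ((TriAt C p).card) c w hndr hchr htrir
    (by omega)
  refine ⟨(d :: u).reverse, by simp, List.nodup_reverse.2 g1, ?_, ?_, ?_, ?_, ?_⟩
  · exact List.isChain_reverse.2 (List.IsChain.imp (fun x y h => adjAt_symm h) g2)
  · intro x hx; exact g3 x (List.mem_reverse.1 hx)
  · rw [List.mem_reverse]
    have : t0 ∈ b :: m := h4.mem (by simp)
    have : t0 ∈ (b :: m).reverse := List.mem_reverse.2 this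
    rw [hw] at this
    exact g4.mem this
  · -- head of (d::u).reverse is head of b::m, i.e. b
    intro t' hA
    obtain ⟨v, hv⟩ := g4
    have hrev : (d :: u).reverse = (b :: m) ++ v.reverse := by
      rw [← hv, ← hw]; simp
    have hbm : (b :: m) <+: (d :: u).reverse := ⟨v.reverse, hrev.symm⟩
    have hhead : ((d :: u).reverse).head (by simp) = b := by
      rw [List.head_eq_iff_head?_eq_some, hrev]
      simp
    rw [hhead] at hA
    exact hbm.mem (h5 t' hA)
  · -- getLast of (d::u).reverse is d
    intro t' hA
    rw [List.getLast_reverse] at hA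
    rw [List.mem_reverse]
    exact g5 t' hA

open Classical in
noncomputable def KAt (C : TwoComplex) (p : Fin C.n) (t : Finset (Fin C.n)) :
    Finset (Finset (Fin C.n)) :=
  (TriAt C p).filter fun t' => RelAt C p t t'

lemma mem_KAt {t t' : Finset (Fin C.n)} :
    t' ∈ KAt C p t ↔ t' ∈ TriAt C p ∧ RelAt C p t t' := by
  simp [KAt]

lemma KAt_eq_of_rel {t t' : Finset (Fin C.n)} (h : RelAt C p t t') :
    KAt C p t = KAt C p t' := by
  ext x
  simp only [mem_KAt]
  exact ⟨fun ⟨h1, h2⟩ => ⟨h1, (relAt_symm h).trans h2⟩, fun ⟨h1, h2⟩ => ⟨h1, h.trans h2⟩⟩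

lemma max_chain_closure (h3 : ¬ C.HasThreeBook) {L : List (Finset (Fin C.n))} (hL : L ≠ [])
    (hnd : L.Nodup) (hch : List.Chain' (AdjAt C p) L)
    (hhead : ∀ t', AdjAt C p (L.head hL) t' → t' ∈ L)
    (hlast : ∀ t', AdjAt C p (L.getLast hL) t' → t' ∈ L) :
    ∀ x ∈ L, ∀ t', AdjAt C p x t' → t' ∈ L := by
  intro x hx t' hA
  obtain ⟨i, hi⟩ := List.mem_iff_get.1 hx
  subst hi
  rcases Nat.eq_zero_or_pos (i : ℕ) with h0 | h0
  · have hi0 : i = (⟨0, by omega⟩ : Fin L.length) := by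
      apply Fin.ext
      simpa using h0
    have : L.get i = L.head hL := by
      rw [hi0, List.get_eq_getElem]
      exact List.getElem_zero (by omega)
    rw [this] at hA
    exact hhead t' hA
  rcases Nat.lt_or_ge ((i : ℕ) + 1) L.length with hik | hik
  · -- internal
    have hchg := List.isChain_iff_getElem.1 hch
    have hprev : AdjAt C p (L.get ⟨(i : ℕ) - 1, by omega⟩) (L.get ⟨(i : ℕ) - 1 + 1, by omega⟩) :=
      hchg ((i : ℕ) - 1) (by omega)
    have hieq : (⟨(i : ℕ) - 1 + 1, by omega⟩ : Fin L.length) = i := by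
      apply Fin.ext
      show (i : ℕ) - 1 + 1 = (i : ℕ)
      omega
    rw [hieq] at hprev
    have hnext : AdjAt C p (L.get i) (L.get ⟨(i : ℕ) + 1, hik⟩) := by
      have h' : AdjAt C p (L.get ⟨(i : ℕ), by omega⟩) (L.get ⟨(i : ℕ) + 1, hik⟩) := hchg (i : ℕ) (by omega)
      have hieq2 : (⟨(i : ℕ), by omega⟩ : Fin L.length) = i := Fin.ext rfl
      rwa [hieq2] at h'
    have hne : L.get ⟨(i : ℕ) - 1, by omega⟩ ≠ L.get ⟨(i : ℕ) + 1, hik⟩ := by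
      intro h
      have h2 := (List.nodup_iff_injective_get.1 hnd) h
      have h3 : (i : ℕ) - 1 = (i : ℕ) + 1 := congrArg Fin.val h2
      omega
    rcases two_nbrs h3 hne (adjAt_symm hprev) hnext hA with rfl | rfl
    · exact List.get_mem ..
    · exact List.get_mem ..
  · -- last
    have hi1 : i = (⟨L.length - 1, by omega⟩ : Fin L.length) := by
      apply Fin.ext
      show (i : ℕ) = L.length - 1
      omega
    have : L.get i = L.getLast hL := by
      rw [hi1, List.get_eq_getElem, List.getLast_eq_getElem]
    rw [this] at hA
    exact hlast t' hA

lemma closed_chain_toFinset {L : List (Finset (Fin C.n))}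
    (hch : List.Chain' (AdjAt C p) L) (htri : ∀ x ∈ L, x ∈ TriAt C p)
    (hclosed : ∀ x ∈ L, ∀ t', AdjAt C p x t' → t' ∈ L)
    {t0 : Finset (Fin C.n)} (ht0 : t0 ∈ L) :
    L.toFinset = KAt C p t0 := by
  ext y
  rw [List.mem_toFinset, mem_KAt]
  constructor
  · intro hy
    exact ⟨htri y hy, chain_rel_mem hch ht0 hy⟩
  · rintro ⟨-, hrel⟩
    induction hrel with
    | refl => exact ht0
    | tail _ hadj ih => exact hclosed _ ih _ hadj

lemma fan_conn {T : Finset (Finset (Fin C.n))} (hfan : IsFanAt C p T) :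
    ∀ a ∈ T, ∀ b ∈ T, RelAt C p a b := by
  obtain ⟨k, f, hk, hinj, hmem, hsurj, hface, hconsec, -⟩ := hfan
  have hTri : ∀ i, f i ∈ TriAt C p := fun i =>
    mem_TriAt.2 ⟨(hface i).1, (hface i).2.2, (hface i).2.1⟩
  have hAdj : ∀ (i : Fin k) (h : (i : ℕ) + 1 < k), AdjAt C p (f i) (f ⟨(i : ℕ) + 1, h⟩) := by
    intro i h
    obtain ⟨q, hq, hq1, hq2⟩ := hconsec i h
    refine ⟨hTri i, hTri _, fun heq => ?_, q, hq, hq1, hq2⟩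
    have h2 : (i : ℕ) = (i : ℕ) + 1 := congrArg Fin.val (hinj heq)
    omega
  have hrel0 : ∀ (m : ℕ) (hm : m < k), RelAt C p (f ⟨0, hk⟩) (f ⟨m, hm⟩) := by
    intro m
    induction m with
    | zero => intro hm; exact Relation.ReflTransGen.refl
    | succ m ih =>
      intro hm
      exact (ih (by omega)).trans (Relation.ReflTransGen.single (hAdj ⟨m, by omega⟩ hm))
  intro a ha b hb
  obtain ⟨i, rfl⟩ := hsurj a ha
  obtain ⟨j, rfl⟩ := hsurj b hb
  have hi : f i = f ⟨(i : ℕ), i.isLt⟩ := by congr 1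
  have hj : f j = f ⟨(j : ℕ), j.isLt⟩ := by congr 1
  rw [hi, hj]
  exact (relAt_symm (hrel0 _ _)).trans (hrel0 _ _)

lemma cone_conn {T : Finset (Finset (Fin C.n))} (hcone : IsConeAt C p T) :
    ∀ a ∈ T, ∀ b ∈ T, RelAt C p a b := by
  obtain ⟨k, f, hk, hinj, hmem, hsurj, hface, hconsec, -⟩ := hcone
  haveI : NeZero k := ⟨by omega⟩
  rcases Nat.lt_or_ge k 2 with hk2 | hk2
  · -- k = 1 : subsingleton
    intro a ha b hb
    obtain ⟨i, rfl⟩ := hsurj a ha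
    obtain ⟨j, rfl⟩ := hsurj b hb
    have : k = 1 := by omega
    subst this
    rw [Subsingleton.elim i j]
    exact Relation.ReflTransGen.refl
  have hTri : ∀ i, f i ∈ TriAt C p := fun i =>
    mem_TriAt.2 ⟨(hface i).1, (hface i).2.2, (hface i).2.1⟩
  have hone : (1 : ZMod k) ≠ 0 := by
    intro h
    have hd : ((1 : ℕ) : ZMod k) = 0 := by push_cast; exact h
    rw [ZMod.natCast_eq_zero_iff] at hd
    have := Nat.le_of_dvd one_pos hd
    omega
  have hAdj : ∀ i : ZMod k, AdjAt C p (f i) (f (i + 1)) := by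
    intro i
    obtain ⟨q, hq, hq1, hq2⟩ := hconsec i
    refine ⟨hTri i, hTri _, fun heq => ?_, q, hq, hq1, hq2⟩
    have := hinj heq
    have : (1 : ZMod k) = 0 := by
      have h' := congrArg (fun x => x - i) this
      simpa using h'.symm
    exact hone this
  have hrel0 : ∀ m : ℕ, RelAt C p (f 0) (f (m : ZMod k)) := by
    intro m
    induction m with
    | zero => simp only [Nat.cast_zero]; exact Relation.ReflTransGen.refl
    | succ m ih =>
      have : ((m + 1 : ℕ) : ZMod k) = ((m : ℕ) : ZMod k) + 1 := by push_cast; ring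
      rw [this]
      exact ih.trans (Relation.ReflTransGen.single (hAdj _))
  intro a ha b hb
  obtain ⟨i, rfl⟩ := hsurj a ha
  obtain ⟨j, rfl⟩ := hsurj b hb
  have hi : f i = f ((i.val : ℕ) : ZMod k) := by rw [ZMod.natCast_rightInverse i]
  have hj : f j = f ((j.val : ℕ) : ZMod k) := by rw [ZMod.natCast_rightInverse j]
  rw [hi, hj]
  exact (relAt_symm (hrel0 _)).trans (hrel0 _)

lemma component_cone_or_corner (h3 : ¬ C.HasThreeBook) {t0 : Finset (Fin C.n)}
    (ht0 : t0 ∈ TriAt C p) :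
    IsConeAt C p (KAt C p t0) ∨ IsCornerAt C p (KAt C p t0) := by
  obtain ⟨L, hL, hnd, hch, htri, ht0L, hhd, hlst⟩ := exists_max_chain t0 ht0
  have hclosed := max_chain_closure h3 hL hnd hch hhd hlst
  have hKT : L.toFinset = KAt C p t0 := closed_chain_toFinset hch htri hclosed ht0L
  have hk : 0 < L.length := List.length_pos_iff.2 hL
  have hget_inj : Function.Injective L.get := List.nodup_iff_injective_get.1 hnd
  have hchg := List.isChain_iff_getElem.1 hch
  have hAdjc : ∀ (a : ℕ) (ha : a + 1 < L.length),
      AdjAt C p (L.get ⟨a, by omega⟩) (L.get ⟨a + 1, ha⟩) := fun a ha => hchg a (by omega)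
  have hTriget : ∀ i : Fin L.length, L.get i ∈ TriAt C p := fun i => htri _ (List.get_mem ..)
  have hmemK : ∀ i : Fin L.length, L.get i ∈ KAt C p t0 := fun i =>
    hKT ▸ List.mem_toFinset.2 (List.get_mem ..)
  have hheadeq : ∀ i : Fin L.length, (i : ℕ) = 0 → L.get i = L.head hL := by
    intro i h
    have hi : i = (⟨0, hk⟩ : Fin L.length) := by
      apply Fin.ext
      exact h
    rw [hi, List.get_eq_getElem]
    exact List.getElem_zero hk
  have hlasteq : ∀ i : Fin L.length, (i : ℕ) = L.length - 1 → L.get i = L.getLast hL := by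
    intro i h
    have hi : i = (⟨L.length - 1, by omega⟩ : Fin L.length) := by
      apply Fin.ext
      exact h
    rw [hi, List.get_eq_getElem, List.getLast_eq_getElem]
  by_cases hcyc : 3 ≤ L.length ∧ AdjAt C p (L.head hL) (L.getLast hL)
  · -- cone
    left
    obtain ⟨hk3, hadjhl⟩ := hcyc
    haveI : NeZero L.length := ⟨by omega⟩
    haveI : Fact (1 < L.length) := ⟨by omega⟩
    set f : ZMod L.length → Finset (Fin C.n) := fun i => L.get ⟨i.val, i.val_lt⟩ with hf
    have hfinj : Function.Injective f := by
      intro a b h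
      exact ZMod.val_injective L.length (congrArg Fin.val (hget_inj h))
    have hvadd : ∀ i : ZMod L.length, (i + 1).val = (i.val + 1) % L.length := by
      intro i
      rw [ZMod.val_add, ZMod.val_one]
    have hsucc : ∀ i, AdjAt C p (f i) (f (i + 1)) := by
      intro i
      show AdjAt C p (L.get ⟨i.val, i.val_lt⟩) (L.get ⟨(i + 1).val, (i + 1).val_lt⟩)
      rcases Nat.lt_or_ge (i.val + 1) L.length with h | h
      · have he : (⟨(i + 1).val, (i + 1).val_lt⟩ : Fin L.length) = ⟨i.val + 1, h⟩ := by
          apply Fin.ext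
          show (i + 1).val = i.val + 1
          rw [hvadd]
          exact Nat.mod_eq_of_lt h
        rw [he]
        exact hAdjc i.val h
      · have hv : i.val = L.length - 1 := by
          have := ZMod.val_lt i
          omega
        have h0 : (i + 1).val = 0 := by
          rw [hvadd, hv]
          have : L.length - 1 + 1 = L.length := by omega
          rw [this, Nat.mod_self]
        have e1 : L.get ⟨i.val, i.val_lt⟩ = L.getLast hL := hlasteq _ hv
        have e2 : L.get ⟨(i + 1).val, (i + 1).val_lt⟩ = L.head hL := hheadeq _ h0
        rw [e1, e2]
        exact adjAt_symm hadjhl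
    have htwo : (2 : ZMod L.length) ≠ 0 := by
      intro h
      have hd : ((2 : ℕ) : ZMod L.length) = 0 := by push_cast; exact h
      rw [ZMod.natCast_eq_zero_iff] at hd
      have := Nat.le_of_dvd (by norm_num) hd
      omega
    have hAdjcase : ∀ i j : ZMod L.length, AdjAt C p (f i) (f j) → j = i + 1 ∨ i = j + 1 := by
      intro i j hA
      have h1 := hsucc i
      have h2 : AdjAt C p (f i) (f (i - 1)) := by
        have h' := adjAt_symm (hsucc (i - 1))
        rwa [sub_add_cancel] at h'
      have hne : f (i + 1) ≠ f (i - 1) := by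
        intro h
        have he : i + 1 = i - 1 := hfinj h
        apply htwo
        linear_combination he
      rcases two_nbrs h3 hne h1 h2 hA with h | h
      · left
        exact hfinj h
      · right
        have := hfinj h
        rw [this]
        rw [sub_add_cancel]
    refine ⟨L.length, f, by omega, hfinj, fun i => hmemK _, ?_, ?_, fun i => (hsucc i).2.2.2, ?_⟩
    · intro s hs
      rw [← hKT, List.mem_toFinset, List.mem_iff_get] at hs
      obtain ⟨i, rfl⟩ := hs
      refine ⟨((i : ℕ) : ZMod L.length), ?_⟩
      show L.get _ = L.get i
      congr 1
      apply Fin.ext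
      show (((i : ℕ) : ZMod L.length)).val = (i : ℕ)
      rw [ZMod.val_natCast]
      exact Nat.mod_eq_of_lt i.isLt
    · intro i
      have h := mem_TriAt.1 (hTriget ⟨i.val, i.val_lt⟩)
      exact ⟨h.1, h.2.2, h.2.1⟩
    · intro i j hij hji1 hij1
      ext x
      simp only [Finset.mem_inter, Finset.mem_singleton]
      constructor
      · rintro ⟨hxi, hxj⟩
        by_contra hxp
        have hA : AdjAt C p (f i) (f j) :=
          ⟨hTriget _, hTriget _, fun h => hij (hfinj h), x, hxp, hxi, hxj⟩
        rcases hAdjcase i j hA with h | h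
        · exact hji1 h
        · exact hij1 h
      · rintro rfl
        exact ⟨(mem_TriAt.1 (hTriget ⟨i.val, i.val_lt⟩)).2.1,
          (mem_TriAt.1 (hTriget ⟨j.val, j.val_lt⟩)).2.1⟩
  · -- corner
    right
    constructor
    · -- fan
      have hint : ∀ i j : Fin L.length, 0 < (i : ℕ) → (i : ℕ) + 1 < L.length →
          AdjAt C p (L.get i) (L.get j) → (j : ℕ) = (i : ℕ) + 1 ∨ (i : ℕ) = (j : ℕ) + 1 := by
        intro i j h0 h1 hA
        have hprev : AdjAt C p (L.get i) (L.get ⟨(i : ℕ) - 1, by omega⟩) := by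
          have h' := hAdjc ((i : ℕ) - 1) (by omega)
          have he : (⟨(i : ℕ) - 1 + 1, by omega⟩ : Fin L.length) = i := by
            apply Fin.ext
            show (i : ℕ) - 1 + 1 = (i : ℕ)
            omega
          rw [he] at h'
          exact adjAt_symm h'
        have hnext : AdjAt C p (L.get i) (L.get ⟨(i : ℕ) + 1, h1⟩) := by
          have h' := hAdjc (i : ℕ) h1
          have he : (⟨(i : ℕ), by omega⟩ : Fin L.length) = i := Fin.ext rfl
          rwa [he] at h'
        have hne : L.get ⟨(i : ℕ) - 1, by omega⟩ ≠ L.get ⟨(i : ℕ) + 1, h1⟩ := by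
          intro h
          have h2 := congrArg Fin.val (hget_inj h)
          have h3 : (i : ℕ) - 1 = (i : ℕ) + 1 := h2
          omega
        rcases two_nbrs h3 hne hprev hnext hA with h | h
        · right
          have h2 : (j : ℕ) = (i : ℕ) - 1 := congrArg Fin.val (hget_inj h)
          omega
        · left
          exact congrArg Fin.val (hget_inj h)
      have hAdjcase : ∀ i j : Fin L.length, AdjAt C p (L.get i) (L.get j) →
          (j : ℕ) = (i : ℕ) + 1 ∨ (i : ℕ) = (j : ℕ) + 1 := by
        intro i j hA
        by_cases hi : 0 < (i : ℕ) ∧ (i : ℕ) + 1 < L.length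
        · exact hint i j hi.1 hi.2 hA
        by_cases hj : 0 < (j : ℕ) ∧ (j : ℕ) + 1 < L.length
        · rcases hint j i hj.1 hj.2 (adjAt_symm hA) with h | h
          · right
            exact h
          · left
            exact h
        push_neg at hi hj
        have hij : i ≠ j := fun h => hA.2.2.1 (by rw [h])
        have hvne : (i : ℕ) ≠ (j : ℕ) := fun h => hij (Fin.ext h)
        have hi' := i.isLt
        have hj' := j.isLt
        rcases Nat.lt_or_ge L.length 3 with hk3 | hk3
        · omega
        · exfalso
          apply hcyc
          refine ⟨hk3, ?_⟩
          have hvi : (i : ℕ) = 0 ∨ (i : ℕ) = L.length - 1 := by omega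
          have hvj : (j : ℕ) = 0 ∨ (j : ℕ) = L.length - 1 := by omega
          rcases hvi with h | h <;> rcases hvj with h' | h'
          · omega
          · rw [← hheadeq i h, ← hlasteq j h']
            exact hA
          · rw [← hheadeq j h', ← hlasteq i h]
            exact adjAt_symm hA
          · omega
      refine ⟨L.length, L.get, hk, hget_inj, fun i => hmemK _, ?_, ?_, ?_, ?_⟩
      · intro s hs
        rw [← hKT, List.mem_toFinset, List.mem_iff_get] at hs
        obtain ⟨i, rfl⟩ := hs
        exact ⟨i, rfl⟩
      · intro i
        have h := mem_TriAt.1 (hTriget i)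
        exact ⟨h.1, h.2.2, h.2.1⟩
      · intro i h
        have h' := hAdjc (i : ℕ) h
        have he : (⟨(i : ℕ), by omega⟩ : Fin L.length) = i := Fin.ext rfl
        rw [he] at h'
        exact h'.2.2.2
      · intro i j hij hji1 hij1
        ext x
        simp only [Finset.mem_inter, Finset.mem_singleton]
        constructor
        · rintro ⟨hxi, hxj⟩
          by_contra hxp
          have hA : AdjAt C p (L.get i) (L.get j) :=
            ⟨hTriget _, hTriget _, fun h => hij (hget_inj h), x, hxp, hxi, hxj⟩
          rcases hAdjcase i j hA with h | h
          · exact hji1 h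
          · exact hij1 h
        · rintro rfl
          exact ⟨(mem_TriAt.1 (hTriget i)).2.1, (mem_TriAt.1 (hTriget j)).2.1⟩
    · -- maximality
      intro T' hsub hfan'
      obtain ⟨u, huT', huT⟩ := Finset.exists_of_ssubset hsub
      have ht0T' : t0 ∈ T' := hsub.1 (mem_KAt.2 ⟨ht0, Relation.ReflTransGen.refl⟩)
      have hrel : RelAt C p t0 u := fan_conn hfan' t0 ht0T' u huT'
      have hu : u ∈ TriAt C p := by
        obtain ⟨k', f', hk', hinj', hmem', hsurj', hface', hc', hp'⟩ := hfan'
        obtain ⟨i, rfl⟩ := hsurj' u huT'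
        exact mem_TriAt.2 ⟨(hface' i).1, (hface' i).2.2, (hface' i).2.1⟩
      exact huT (mem_KAt.2 ⟨hu, hrel⟩)

lemma cone_props {T : Finset (Finset (Fin C.n))} (h : IsConeAt C p T) :
    T.Nonempty ∧ ∀ t ∈ T, t ∈ TriAt C p := by
  obtain ⟨k, f, hk, -, hmem, hsurj, hface, -, -⟩ := h
  haveI : NeZero k := ⟨by omega⟩
  refine ⟨⟨f 0, hmem 0⟩, fun t ht => ?_⟩
  obtain ⟨i, rfl⟩ := hsurj t ht
  exact mem_TriAt.2 ⟨(hface i).1, (hface i).2.2, (hface i).2.1⟩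

lemma fan_props {T : Finset (Finset (Fin C.n))} (h : IsFanAt C p T) :
    T.Nonempty ∧ ∀ t ∈ T, t ∈ TriAt C p := by
  obtain ⟨k, f, hk, -, hmem, hsurj, hface, -, -⟩ := h
  refine ⟨⟨f ⟨0, hk⟩, hmem _⟩, fun t ht => ?_⟩
  obtain ⟨i, rfl⟩ := hsurj t ht
  exact mem_TriAt.2 ⟨(hface i).1, (hface i).2.2, (hface i).2.1⟩

open Classical in
noncomputable def IsoSegs (C : TwoComplex) (p : Fin C.n) : Finset (Finset (Fin C.n)) :=
  C.faces.filter fun s => p ∈ s ∧ s.card = 2 ∧ ∀ t ∈ C.faces, ¬ s ⊂ t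

lemma mem_IsoSegs {s : Finset (Fin C.n)} : s ∈ IsoSegs C p ↔ IsIsolatedSegAt C p s := by
  simp only [IsoSegs, Finset.mem_filter, IsIsolatedSegAt]

noncomputable def blockOf (C : TwoComplex) (p : Fin C.n) (t : Finset (Fin C.n)) :
    Finset (Finset (Fin C.n)) :=
  KAt C p t ∪ segsOf C p (KAt C p t)

noncomputable def canonP (C : TwoComplex) (p : Fin C.n) :
    Finset (Finset (Finset (Fin C.n))) :=
  (TriAt C p).image (blockOf C p) ∪ (IsoSegs C p).image (fun s => {s})

lemma mem_segsOf {T : Finset (Finset (Fin C.n))} {s : Finset (Fin C.n)} :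
    s ∈ segsOf C p T ↔ s ∈ C.faces ∧ s.card = 2 ∧ p ∈ s ∧ ∃ t ∈ T, s ⊆ t := by
  simp [segsOf]

lemma card_of_mem_KAt {t x : Finset (Fin C.n)} (h : x ∈ KAt C p t) : x.card = 3 :=
  (mem_TriAt.1 (mem_KAt.1 h).1).2.2

lemma KAt_eq_of_mem_blockOf {t t' x : Finset (Fin C.n)}
    (hx : x ∈ blockOf C p t) (hx' : x ∈ blockOf C p t') : KAt C p t = KAt C p t' := by
  have key : ∀ y : Finset (Fin C.n), x ∈ blockOf C p y →
      ∃ u, u ∈ KAt C p y ∧ (x = u ∨ (x.card = 2 ∧ p ∈ x ∧ x ⊆ u)) := by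
    intro y hy
    rcases Finset.mem_union.1 hy with h | h
    · exact ⟨x, h, Or.inl rfl⟩
    · obtain ⟨-, hc, hp, u, hu, hsub⟩ := mem_segsOf.1 h
      exact ⟨u, hu, Or.inr ⟨hc, hp, hsub⟩⟩
  obtain ⟨u, hu, hcase⟩ := key t hx
  obtain ⟨u', hu', hcase'⟩ := key t' hx'
  have huu' : RelAt C p u u' := by
    rcases hcase with rfl | ⟨hc, hp, hsub⟩
    · rcases hcase' with rfl | ⟨hc', hp', hsub'⟩
      · exact Relation.ReflTransGen.refl
      · have := card_of_mem_KAt hu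
        omega
    · rcases hcase' with rfl | ⟨hc', hp', hsub'⟩
      · have := card_of_mem_KAt hu'
        omega
      · by_cases he : u = u'
        · subst he
          exact Relation.ReflTransGen.refl
        · have hne : (x.erase p).Nonempty := by
            apply Finset.card_pos.1
            rw [Finset.card_erase_of_mem hp, hc]
            norm_num
          obtain ⟨q, hq⟩ := hne
          rw [Finset.mem_erase] at hq
          exact Relation.ReflTransGen.single
            ⟨(mem_KAt.1 hu).1, (mem_KAt.1 hu').1, he, q, hq.1, hsub hq.2, hsub' hq.2⟩
  calc KAt C p t = KAt C p u := KAt_eq_of_rel (mem_KAt.1 hu).2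
    _ = KAt C p u' := KAt_eq_of_rel huu'
    _ = KAt C p t' := (KAt_eq_of_rel (mem_KAt.1 hu').2).symm

lemma blockAt_canonP (h3 : ¬ C.HasThreeBook) : ∀ B ∈ canonP C p, IsBlockAt C p B := by
  intro B hB
  rcases Finset.mem_union.1 hB with h | h
  · obtain ⟨t, ht, rfl⟩ := Finset.mem_image.1 h
    rcases component_cone_or_corner h3 ht with hc | hc
    · exact Or.inr (Or.inl ⟨KAt C p t, hc, rfl⟩)
    · exact Or.inr (Or.inr ⟨KAt C p t, hc, rfl⟩)
  · obtain ⟨s, hs, rfl⟩ := Finset.mem_image.1 h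
    exact Or.inl ⟨s, mem_IsoSegs.1 hs, rfl⟩

lemma not_iso_of_mem_blockOf {t x : Finset (Fin C.n)} (hx : x ∈ blockOf C p t)
    (hiso : IsIsolatedSegAt C p x) : False := by
  rcases Finset.mem_union.1 hx with h | h
  · have := card_of_mem_KAt h
    have := hiso.2.2.1
    omega
  · obtain ⟨-, hc, hp, u, hu, hsub⟩ := mem_segsOf.1 h
    have hu3 : u.card = 3 := card_of_mem_KAt hu
    have huf : u ∈ C.faces := (mem_TriAt.1 (mem_KAt.1 hu).1).1
    apply hiso.2.2.2 u huf
    refine Finset.ssubset_iff_subset_ne.2 ⟨hsub, fun h => ?_⟩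
    rw [h] at hc
    omega

lemma canonP_disjoint : ∀ B ∈ canonP C p, ∀ B' ∈ canonP C p, B ≠ B' → Disjoint B B' := by
  intro B hB B' hB' hne
  rw [Finset.disjoint_left]
  intro a ha ha'
  apply hne
  rcases Finset.mem_union.1 hB with h | h <;> rcases Finset.mem_union.1 hB' with h' | h'
  · obtain ⟨t, ht, rfl⟩ := Finset.mem_image.1 h
    obtain ⟨t', ht', rfl⟩ := Finset.mem_image.1 h'
    have := KAt_eq_of_mem_blockOf ha ha'
    unfold blockOf
    rw [this]
  · obtain ⟨t, ht, rfl⟩ := Finset.mem_image.1 h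
    obtain ⟨s, hs, rfl⟩ := Finset.mem_image.1 h'
    rw [Finset.mem_singleton] at ha'
    subst ha'
    exact absurd (mem_IsoSegs.1 hs) (fun hiso => not_iso_of_mem_blockOf ha hiso)
  · obtain ⟨s, hs, rfl⟩ := Finset.mem_image.1 h
    obtain ⟨t, ht, rfl⟩ := Finset.mem_image.1 h'
    rw [Finset.mem_singleton] at ha
    subst ha
    exact absurd (mem_IsoSegs.1 hs) (fun hiso => not_iso_of_mem_blockOf ha' hiso)
  · obtain ⟨s, hs, rfl⟩ := Finset.mem_image.1 h
    obtain ⟨s', hs', rfl⟩ := Finset.mem_image.1 h'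
    rw [Finset.mem_singleton] at ha ha'
    rw [← ha, ha']

lemma mem_ground_iff {x : Finset (Fin C.n)} :
    x ∈ segsAndTrisAt C p ↔ x ∈ C.faces ∧ p ∈ x ∧ 2 ≤ x.card := by
  simp [segsAndTrisAt]

lemma canonP_cover : ∀ x, x ∈ segsAndTrisAt C p ↔ ∃ B ∈ canonP C p, x ∈ B := by
  intro x
  constructor
  · intro hx
    obtain ⟨hf, hp, hc⟩ := mem_ground_iff.1 hx
    have hc3 : x.card ≤ 3 := C.dim_le x hf
    rcases Nat.lt_or_ge x.card 3 with h2 | h3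
    · -- segment
      have hc2 : x.card = 2 := by omega
      by_cases hiso : ∀ t ∈ C.faces, ¬ x ⊂ t
      · refine ⟨{x}, Finset.mem_union_right _ (Finset.mem_image.2
          ⟨x, mem_IsoSegs.2 ⟨hf, hp, hc2, hiso⟩, rfl⟩), Finset.mem_singleton_self x⟩
      · push_neg at hiso
        obtain ⟨t, htf, hxt⟩ := hiso
        have htc : t.card = 3 := by
          have h1 := Finset.card_lt_card hxt
          have h2 := C.dim_le t htf
          omega
        have ht : t ∈ TriAt C p := mem_TriAt.2 ⟨htf, hxt.subset hp, htc⟩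
        refine ⟨blockOf C p t, Finset.mem_union_left _ (Finset.mem_image.2 ⟨t, ht, rfl⟩), ?_⟩
        exact Finset.mem_union_right _ (mem_segsOf.2 ⟨hf, hc2, hp,
          t, mem_KAt.2 ⟨ht, Relation.ReflTransGen.refl⟩, hxt.subset⟩)
    · -- triangle
      have ht : x ∈ TriAt C p := mem_TriAt.2 ⟨hf, hp, by omega⟩
      exact ⟨blockOf C p x, Finset.mem_union_left _ (Finset.mem_image.2 ⟨x, ht, rfl⟩),
        Finset.mem_union_left _ (mem_KAt.2 ⟨ht, Relation.ReflTransGen.refl⟩)⟩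
  · rintro ⟨B, hB, hxB⟩
    rcases Finset.mem_union.1 hB with h | h
    · obtain ⟨t, ht, rfl⟩ := Finset.mem_image.1 h
      rcases Finset.mem_union.1 hxB with h' | h'
      · have := mem_TriAt.1 (mem_KAt.1 h').1
        exact mem_ground_iff.2 ⟨this.1, this.2.1, by omega⟩
      · obtain ⟨hf, hc, hp, -⟩ := mem_segsOf.1 h'
        exact mem_ground_iff.2 ⟨hf, hp, by omega⟩
    · obtain ⟨s, hs, rfl⟩ := Finset.mem_image.1 h
      rw [Finset.mem_singleton] at hxB
      subst hxB
      have hiso := mem_IsoSegs.1 hs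
      exact mem_ground_iff.2 ⟨hiso.1, hiso.2.1, le_of_eq hiso.2.2.1.symm⟩

lemma canonP_unique (h3 : ¬ C.HasThreeBook) (P' : Finset (Finset (Finset (Fin C.n))))
    (hblk : ∀ B ∈ P', IsBlockAt C p B)
    (hdisj : ∀ B ∈ P', ∀ B' ∈ P', B ≠ B' → Disjoint B B')
    (hcov : ∀ s, s ∈ segsAndTrisAt C p ↔ ∃ B ∈ P', s ∈ B) :
    P' = canonP C p := by
  -- unique containing block
  have hu2 : ∀ B ∈ P', ∀ B'' ∈ P', ∀ x, x ∈ B → x ∈ B'' → B = B'' := by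
    intro B hB B'' hB'' x hx hx'
    by_contra hne
    exact Finset.disjoint_left.1 (hdisj B hB B'' hB'' hne) hx hx'
  -- segments of a triangle lie in its block
  have hu3 : ∀ B ∈ P', ∀ t ∈ B, t ∈ TriAt C p →
      ∀ s : Finset (Fin C.n), s.card = 2 → p ∈ s → s ⊆ t → s ∈ B := by
    intro B hB t htB ht s hsc hsp hst
    have ht3 : t.card = 3 := (mem_TriAt.1 ht).2.2
    rcases hblk B hB with ⟨s0, hiso, rfl⟩ | ⟨T, hcone, rfl⟩ | ⟨T, hcorner, rfl⟩
    · rw [Finset.mem_singleton] at htB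
      subst htB
      have := hiso.2.2.1
      omega
    · have htT : t ∈ T := by
        rcases Finset.mem_union.1 htB with h | h
        · exact h
        · have := (mem_segsOf.1 h).2.1
          omega
      refine Finset.mem_union_right _ (mem_segsOf.2 ⟨?_, hsc, hsp, t, htT, hst⟩)
      exact C.down_closed t (mem_TriAt.1 ht).1 s hst ⟨p, hsp⟩
    · have htT : t ∈ T := by
        rcases Finset.mem_union.1 htB with h | h
        · exact h
        · have := (mem_segsOf.1 h).2.1
          omega
      refine Finset.mem_union_right _ (mem_segsOf.2 ⟨?_, hsc, hsp, t, htT, hst⟩)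
      exact C.down_closed t (mem_TriAt.1 ht).1 s hst ⟨p, hsp⟩
  -- blocks of adjacent triangles coincide
  have hu4 : ∀ B ∈ P', ∀ B'' ∈ P', ∀ t t' : Finset (Fin C.n), t ∈ B → t' ∈ B'' →
      AdjAt C p t t' → B = B'' := by
    intro B hB B'' hB'' t t' htB htB'' hA
    obtain ⟨ht, ht', hne, q, hq, hqt, hqt'⟩ := hA
    have hpt : p ∈ t := (mem_TriAt.1 ht).2.1
    have hpt' : p ∈ t' := (mem_TriAt.1 ht').2.1
    have hsc : ({p, q} : Finset (Fin C.n)).card = 2 := by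
      rw [Finset.card_insert_of_notMem (by simp [Ne.symm hq]), Finset.card_singleton]
    have hsp : p ∈ ({p, q} : Finset (Fin C.n)) := Finset.mem_insert_self ..
    have hs1 : ({p, q} : Finset (Fin C.n)) ∈ B :=
      hu3 B hB t htB ht _ hsc hsp
        (Finset.insert_subset hpt (Finset.singleton_subset_iff.2 hqt))
    have hs2 : ({p, q} : Finset (Fin C.n)) ∈ B'' :=
      hu3 B'' hB'' t' htB'' ht' _ hsc hsp
        (Finset.insert_subset hpt' (Finset.singleton_subset_iff.2 hqt'))
    exact hu2 B hB B'' hB'' _ hs1 hs2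
  have hground : ∀ t : Finset (Fin C.n), t ∈ TriAt C p → t ∈ segsAndTrisAt C p := by
    intro t ht
    have := mem_TriAt.1 ht
    exact mem_ground_iff.2 ⟨this.1, this.2.1, by omega⟩
  -- blocks of related triangles coincide
  have hu5 : ∀ t t' : Finset (Fin C.n), RelAt C p t t' → ∀ B ∈ P', ∀ B'' ∈ P',
      t ∈ B → t' ∈ B'' → B = B'' := by
    intro t t' hrel
    induction hrel with
    | refl =>
      intro B hB B'' hB'' h1 h2
      exact hu2 B hB B'' hB'' _ h1 h2
    | @tail b c hrel hA ih =>
      intro B hB B'' hB'' h1 h2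
      obtain ⟨Bb, hBb, hbBb⟩ := (hcov b).1 (hground b hA.1)
      have e1 : B = Bb := ih B hB Bb hBb h1 hbBb
      have e2 : Bb = B'' := hu4 Bb hBb B'' hB'' b c hbBb h2 hA
      rw [e1, e2]
  -- every block of P' is a canonical block
  have hsub : ∀ B ∈ P', B ∈ canonP C p := by
    intro B hB
    rcases hblk B hB with ⟨s0, hiso, rfl⟩ | ⟨T, hcone, rfl⟩ | ⟨T, hcorner, rfl⟩
    · exact Finset.mem_union_right _ (Finset.mem_image.2 ⟨s0, mem_IsoSegs.2 hiso, rfl⟩)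
    · obtain ⟨⟨t, htT⟩, hTsub⟩ := cone_props hcone
      have ht : t ∈ TriAt C p := hTsub t htT
      have hconn := cone_conn hcone
      have hTK : T = KAt C p t := by
        apply Finset.Subset.antisymm
        · intro u hu
          exact mem_KAt.2 ⟨hTsub u hu, hconn t htT u hu⟩
        · intro u hu
          obtain ⟨huT, hrel⟩ := mem_KAt.1 hu
          obtain ⟨Bu, hBu, huBu⟩ := (hcov u).1 (hground u huT)
          have : T ∪ segsOf C p T = Bu :=
            hu5 t u hrel _ hB Bu hBu (Finset.mem_union_left _ htT) huBu
          rw [← this] at huBu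
          rcases Finset.mem_union.1 huBu with h | h
          · exact h
          · have h1 := (mem_segsOf.1 h).2.1
            have h2 := (mem_TriAt.1 huT).2.2
            omega
      rw [hTK]
      exact Finset.mem_union_left _ (Finset.mem_image.2 ⟨t, ht, rfl⟩)
    · obtain ⟨⟨t, htT⟩, hTsub⟩ := fan_props hcorner.1
      have ht : t ∈ TriAt C p := hTsub t htT
      have hconn := fan_conn hcorner.1
      have hTK : T = KAt C p t := by
        apply Finset.Subset.antisymm
        · intro u hu
          exact mem_KAt.2 ⟨hTsub u hu, hconn t htT u hu⟩
        · intro u hu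
          obtain ⟨huT, hrel⟩ := mem_KAt.1 hu
          obtain ⟨Bu, hBu, huBu⟩ := (hcov u).1 (hground u huT)
          have : T ∪ segsOf C p T = Bu :=
            hu5 t u hrel _ hB Bu hBu (Finset.mem_union_left _ htT) huBu
          rw [← this] at huBu
          rcases Finset.mem_union.1 huBu with h | h
          · exact h
          · have h1 := (mem_segsOf.1 h).2.1
            have h2 := (mem_TriAt.1 huT).2.2
            omega
      rw [hTK]
      exact Finset.mem_union_left _ (Finset.mem_image.2 ⟨t, ht, rfl⟩)
  -- conclude equality
  ext B
  constructor
  · exact hsub B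
  · intro hB
    -- B is nonempty
    have hne : B.Nonempty := by
      rcases Finset.mem_union.1 hB with h | h
      · obtain ⟨t, ht, rfl⟩ := Finset.mem_image.1 h
        exact ⟨t, Finset.mem_union_left _ (mem_KAt.2 ⟨ht, Relation.ReflTransGen.refl⟩)⟩
      · obtain ⟨s, hs, rfl⟩ := Finset.mem_image.1 h
        exact ⟨s, Finset.mem_singleton_self s⟩
    obtain ⟨x, hx⟩ := hne
    have hxg : x ∈ segsAndTrisAt C p := (canonP_cover x).2 ⟨B, hB, hx⟩
    obtain ⟨B', hB', hxB'⟩ := (hcov x).1 hxg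
    have hB'c : B' ∈ canonP C p := hsub B' hB'
    by_cases he : B = B'
    · rw [he]
      exact hB'
    · exact absurd hxB' (Finset.disjoint_left.1 (canonP_disjoint B hB B' hB'c he) hx)

end CCB

/-- In a 2-complex without 3-books, the segments and triangles incident
with any node `p` are uniquely partitioned into cones, corners, and isolated segments. -/
theorem unique_partition_into_cones_corners_isolated
    (C : TwoComplex) (h3 : ¬ C.HasThreeBook) (p : Fin C.n) :
    ∃! P : Finset (Finset (Finset (Fin C.n))),
      (∀ B ∈ P, IsBlockAt C p B) ∧
      (∀ B ∈ P, ∀ B' ∈ P, B ≠ B' → Disjoint B B') ∧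
      (∀ s, s ∈ segsAndTrisAt C p ↔ ∃ B ∈ P, s ∈ B) := by
  refine ⟨CCB.canonP C p, ⟨CCB.blockAt_canonP h3, CCB.canonP_disjoint, CCB.canonP_cover⟩, ?_⟩
  intro P' hP'
  exact CCB.canonP_unique h3 P' hP'.1 hP'.2.1 hP'.2.2
end

section
/- Subdividing each edge of a graph G does not change whether G topologically embeds into a 2-complex C; moreover, if G embeds into C and C has k singular nodes, then the graph G' obtained from G by subdividing each edge k times admits an embedding into C in which every singular node of C in the image is the image of a vertex of G'. -/
/-- The graph obtained from `G` by subdividing each edge `k` times. -/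
def FinGraph.subdivide (G : FinGraph) (k : ℕ) : FinGraph where
  V := G.V ⊕ (G.E × Fin k)
  E := G.E × Fin (k + 1)
  ends := fun e =>
    ((if h : (e.2 : ℕ) = 0 then Sum.inl (G.ends e.1).1
      else Sum.inr (e.1, ⟨(e.2 : ℕ) - 1, by have := e.2.isLt; omega⟩)),
     (if h : (e.2 : ℕ) = k then Sum.inl (G.ends e.1).2
      else Sum.inr (e.1, ⟨(e.2 : ℕ), by have := e.2.isLt; omega⟩)))

/-- The point of the realization of `C` corresponding to a node `p`. -/
def nodePoint (C : TwoComplex) (p : Fin C.n) : Fin C.n → ℝ :=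
  fun q => if q = p then 1 else 0

open Set
namespace SubdivAux
variable {S : Type*} [TopologicalSpace S]

lemma mem_Ioo_coe {t : unitInterval} :
    t ∈ Set.Ioo (0 : unitInterval) 1 ↔ 0 < (t : ℝ) ∧ (t : ℝ) < 1 := by
  simp only [Set.mem_Ioo]
  exact ⟨fun ⟨h1, h2⟩ => ⟨h1, h2⟩, fun ⟨h1, h2⟩ => ⟨h1, h2⟩⟩

lemma subIcc_mem {a b : ℝ} (h0 : 0 ≤ a) (hab : a < b) (h1 : b ≤ 1) (t : unitInterval) :
    a + (t : ℝ) * (b - a) ∈ unitInterval := by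
  obtain ⟨t, ht0, ht1⟩ := t
  constructor
  · simp only
    nlinarith
  · simp only
    nlinarith

noncomputable def subIcc {x y : S} (γ : Path x y) {a b : ℝ}
    (h0 : 0 ≤ a) (hab : a < b) (h1 : b ≤ 1) :
    Path (γ ⟨a, h0, le_trans hab.le h1⟩) (γ ⟨b, le_trans h0 hab.le, h1⟩) where
  toFun t := γ ⟨a + t * (b - a), subIcc_mem h0 hab h1 t⟩
  continuous_toFun := γ.continuous.comp (Continuous.subtype_mk (by fun_prop) _)
  source' := by
    show γ _ = γ _
    exact congrArg γ (Subtype.ext (by simp))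
  target' := by
    show γ _ = γ _
    exact congrArg γ (Subtype.ext (by simp))

lemma subIcc_apply {x y : S} (γ : Path x y) {a b : ℝ}
    (h0 : 0 ≤ a) (hab : a < b) (h1 : b ≤ 1) (t : unitInterval) :
    subIcc γ h0 hab h1 t = γ ⟨a + t * (b - a), subIcc_mem h0 hab h1 t⟩ := rfl


/-- Case analysis for values of `γ.trans γ'` at a parameter in the open interval. -/
lemma trans_side {x y z : S} (γ : Path x y) (γ' : Path y z) (u : unitInterval)
    (hu0 : 0 < (u : ℝ)) (hu1 : (u : ℝ) < 1) :
    (∃ s ∈ Set.Ioo (0 : unitInterval) 1, (γ.trans γ') u = γ s ∧ (s : ℝ) = 2 * u) ∨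
    ((u : ℝ) = 1 / 2 ∧ (γ.trans γ') u = y) ∨
    (∃ s ∈ Set.Ioo (0 : unitInterval) 1, (γ.trans γ') u = γ' s ∧ (s : ℝ) = 2 * u - 1) := by
  by_cases h : (u : ℝ) ≤ 1 / 2
  · have p1 : 2 * (u : ℝ) ∈ unitInterval := ⟨by linarith, by linarith⟩
    have happ : (γ.trans γ') u = γ ⟨2 * (u : ℝ), p1⟩ := by
      rw [Path.trans_apply, dif_pos h]
    rcases eq_or_lt_of_le h with h' | h'
    · right; left
      refine ⟨h', ?_⟩
      rw [happ]
      have he : (⟨2 * (u : ℝ), p1⟩ : unitInterval) = 1 := by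
        apply Subtype.ext
        show 2 * (u : ℝ) = ((1 : unitInterval) : ℝ)
        rw [Set.Icc.coe_one]; linarith
      rw [he]; exact γ.target
    · left
      refine ⟨_, mem_Ioo_coe.2 ⟨?_, ?_⟩, happ, rfl⟩
      · show (0 : ℝ) < 2 * (u : ℝ); linarith
      · show 2 * (u : ℝ) < 1; linarith
  · push_neg at h
    have p2 : 2 * (u : ℝ) - 1 ∈ unitInterval := ⟨by linarith, by linarith⟩
    have happ : (γ.trans γ') u = γ' ⟨2 * (u : ℝ) - 1, p2⟩ := by
      rw [Path.trans_apply, dif_neg (by linarith)]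
    right; right
    refine ⟨_, mem_Ioo_coe.2 ⟨?_, ?_⟩, happ, rfl⟩
    · show (0 : ℝ) < 2 * (u : ℝ) - 1; linarith
    · show 2 * (u : ℝ) - 1 < 1; linarith

/-- Values of `γ.trans γ'` on the open interval. -/
lemma trans_cases {x y z : S} (γ : Path x y) (γ' : Path y z) {t : unitInterval}
    (ht : t ∈ Set.Ioo (0 : unitInterval) 1) :
    (∃ s ∈ Set.Ioo (0 : unitInterval) 1, (γ.trans γ') t = γ s) ∨ (γ.trans γ') t = y ∨
    (∃ s ∈ Set.Ioo (0 : unitInterval) 1, (γ.trans γ') t = γ' s) := by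
  obtain ⟨ht0, ht1⟩ := mem_Ioo_coe.1 ht
  rcases trans_side γ γ' t ht0 ht1 with ⟨s, hs, hval, _⟩ | ⟨_, hval⟩ | ⟨s, hs, hval, _⟩
  · exact Or.inl ⟨s, hs, hval⟩
  · exact Or.inr (Or.inl hval)
  · exact Or.inr (Or.inr ⟨s, hs, hval⟩)

/-- Injectivity of `γ.trans γ'` on the open interval. -/
lemma trans_injOn {x y z : S} (γ : Path x y) (γ' : Path y z)
    (hγ : Set.InjOn γ (Set.Ioo 0 1)) (hγ' : Set.InjOn γ' (Set.Ioo 0 1))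
    (hdisj : ∀ s ∈ Set.Ioo (0 : unitInterval) 1, ∀ s' ∈ Set.Ioo (0 : unitInterval) 1,
      γ s ≠ γ' s')
    (hy : ∀ s ∈ Set.Ioo (0 : unitInterval) 1, γ s ≠ y)
    (hy' : ∀ s ∈ Set.Ioo (0 : unitInterval) 1, γ' s ≠ y) :
    Set.InjOn (γ.trans γ') (Set.Ioo 0 1) := by
  intro t ht t' ht' heq
  obtain ⟨ht0, ht1⟩ := mem_Ioo_coe.1 ht
  obtain ⟨ht0', ht1'⟩ := mem_Ioo_coe.1 ht'
  rcases trans_side γ γ' t ht0 ht1 with ⟨s, hs, hval, hcoe⟩ | ⟨hhalf, hval⟩ |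
      ⟨s, hs, hval, hcoe⟩ <;>
    rcases trans_side γ γ' t' ht0' ht1' with ⟨s', hs', hval', hcoe'⟩ | ⟨hhalf', hval'⟩ |
      ⟨s', hs', hval', hcoe'⟩
  · have h2 := congrArg Subtype.val (hγ hs hs' (hval.symm.trans (heq.trans hval')))
    rw [hcoe, hcoe'] at h2
    exact Subtype.ext (by linarith)
  · exact absurd (hval.symm.trans (heq.trans hval')) (hy _ hs)
  · exact absurd (hval.symm.trans (heq.trans hval')) (hdisj _ hs _ hs')
  · exact absurd (hval'.symm.trans (heq.symm.trans hval)) (hy _ hs')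
  · exact Subtype.ext (hhalf.trans hhalf'.symm)
  · exact absurd (hval'.symm.trans (heq.symm.trans hval)) (hy' _ hs')
  · exact absurd (hval'.symm.trans (heq.symm.trans hval)) (hdisj _ hs' _ hs)
  · exact absurd (hval.symm.trans (heq.trans hval')) (hy' _ hs)
  · have h2 := congrArg Subtype.val (hγ' hs hs' (hval.symm.trans (heq.trans hval')))
    rw [hcoe, hcoe'] at h2
    exact Subtype.ext (by linarith)

end SubdivAux

namespace SubdivAux
variable {S : Type*} [TopologicalSpace S]

/-- Concatenating a chain of arcs yields an arc whose interior values are interior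
values of the pieces or interior junction vertices. -/
lemma concat_exists : ∀ (m : ℕ), 0 < m → ∀ (v : Fin (m+1) → S)
    (γ : ∀ j : Fin m, Path (v j.castSucc) (v j.succ)),
    (∀ j, Set.InjOn (γ j) (Set.Ioo 0 1)) →
    (∀ j j', j ≠ j' → ∀ s ∈ Set.Ioo (0 : unitInterval) 1,
      ∀ s' ∈ Set.Ioo (0 : unitInterval) 1, γ j s ≠ γ j' s') →
    (∀ j, ∀ s ∈ Set.Ioo (0 : unitInterval) 1, ∀ i, γ j s ≠ v i) →
    (Set.InjOn v {i | (i : ℕ) ≠ 0 ∧ (i : ℕ) ≠ m}) →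
    ∃ δ : Path (v 0) (v (Fin.last m)), Set.InjOn δ (Set.Ioo 0 1) ∧
      ∀ t ∈ Set.Ioo (0 : unitInterval) 1,
        (∃ j, ∃ s ∈ Set.Ioo (0 : unitInterval) 1, δ t = γ j s) ∨
        (∃ i : Fin (m+1), (i : ℕ) ≠ 0 ∧ (i : ℕ) ≠ m ∧ δ t = v i) := by
  intro m
  induction m with
  | zero => omega
  | succ m IH =>
    intro _ v γ hinj hdisj havoid hv
    rcases Nat.eq_zero_or_pos m with hm | hm
    · -- single piece
      subst hm
      refine ⟨(γ 0).cast (congrArg v (by ext; simp)) (congrArg v (by ext; simp)), ?_, ?_⟩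
      · simpa only [Path.cast_coe] using hinj 0
      · intro t ht
        exact Or.inl ⟨0, t, ht, by rw [Path.cast_coe]⟩
    · -- more than one piece
      set v' : Fin (m+1) → S := fun i => v i.castSucc with hv'def
      have hvC : ∀ (i i' : Fin (m+2)), (i : ℕ) ≠ 0 → (i : ℕ) ≠ m+1 → (i' : ℕ) ≠ 0 →
          (i' : ℕ) ≠ m+1 → v i = v i' → i = i' := fun i i' h1 h2 h3 h4 h =>
        hv ⟨h1, h2⟩ ⟨h3, h4⟩ h
      set γ' : ∀ j : Fin m, Path (v' j.castSucc) (v' j.succ) := fun j =>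
        (γ j.castSucc).cast rfl (congrArg v (Fin.succ_castSucc j).symm) with hγ'def
      have hcoe' : ∀ j, (γ' j : unitInterval → S) = γ j.castSucc := fun j => Path.cast_coe _ _ _
      obtain ⟨δ₀, hδ₀inj, hδ₀char⟩ := IH hm v' γ'
        (fun j => by rw [hcoe']; exact hinj _)
        (fun j j' hne s hs s' hs' => by
          rw [hcoe', hcoe']
          exact hdisj _ _ (fun h => hne (Fin.castSucc_injective _ h)) s hs s' hs')
        (fun j s hs i => by rw [hcoe']; exact havoid _ s hs _)
        (by
          intro i hi i' hi' h
          obtain ⟨hi1, hi2⟩ := hi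
          obtain ⟨hi1', hi2'⟩ := hi'
          apply Fin.castSucc_injective
          apply hvC _ _ ?_ ?_ ?_ ?_ h
          · simpa using hi1
          · simp only [Fin.coe_castSucc]; have := i.isLt; omega
          · simpa using hi1'
          · simp only [Fin.coe_castSucc]; have := i'.isLt; omega)
      -- last piece
      set σ : Path (v' (Fin.last m)) (v (Fin.last (m+1))) :=
        (γ (Fin.last m)).cast rfl (congrArg v (by ext; simp)) with hσdef
      have hσcoe : (σ : unitInterval → S) = γ (Fin.last m) := Path.cast_coe _ _ _
      have hjunc : v' (Fin.last m) = v ((Fin.last m).castSucc) := rfl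
      -- interior values of δ₀ avoid the junction
      have hδ₀junc : ∀ s ∈ Set.Ioo (0 : unitInterval) 1, δ₀ s ≠ v' (Fin.last m) := by
        intro s hs
        rcases hδ₀char s hs with ⟨j, s₂, hs₂, hval⟩ | ⟨i, hi0, him, hval⟩
        · rw [hval, hcoe']
          exact havoid _ _ hs₂ _
        · rw [hval]
          intro h
          have h2 := hvC i.castSucc (Fin.last m).castSucc
            (by simpa using hi0) (by simp only [Fin.coe_castSucc]; have := i.isLt; omega)
            (by simp; omega) (by simp) h
          have h3 := congrArg Fin.val h2
          simp at h3
          omega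
      have hδ₀σ : ∀ s ∈ Set.Ioo (0 : unitInterval) 1, ∀ s' ∈ Set.Ioo (0 : unitInterval) 1,
          δ₀ s ≠ σ s' := by
        intro s hs s' hs'
        rw [hσcoe]
        rcases hδ₀char s hs with ⟨j, s₂, hs₂, hval⟩ | ⟨i, hi0, him, hval⟩
        · rw [hval, hcoe']
          exact hdisj _ _ (Fin.castSucc_lt_last j).ne s₂ hs₂ s' hs'
        · rw [hval]
          exact (havoid _ s' hs' i.castSucc).symm
      refine ⟨(δ₀.trans σ).cast (congrArg v (by ext; simp)) rfl, ?_, ?_⟩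
      · rw [Path.cast_coe]
        exact trans_injOn δ₀ σ hδ₀inj (by rw [hσcoe]; exact hinj _) hδ₀σ hδ₀junc
          (by rw [hσcoe]; exact fun s hs => havoid _ s hs _)
      · intro t ht
        rw [Path.cast_coe]
        rcases trans_cases δ₀ σ ht with ⟨s, hs, hval⟩ | hval | ⟨s, hs, hval⟩
        · rcases hδ₀char s hs with ⟨j, s₂, hs₂, hval₂⟩ | ⟨i, hi0, him, hval₂⟩
          · refine Or.inl ⟨j.castSucc, s₂, hs₂, ?_⟩
            rw [hval, hval₂, hcoe']
          · refine Or.inr ⟨i.castSucc, hi0, by simp; omega, ?_⟩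
            rw [hval, hval₂]
        · exact Or.inr ⟨(Fin.last m).castSucc, by simp; omega, by simp, hval⟩
        · refine Or.inl ⟨Fin.last m, s, hs, ?_⟩
          rw [hval, hσcoe]
  
end SubdivAux

namespace SubdivAux

/-- The chain of vertices along a subdivided edge. -/
def chain (G : FinGraph) (k : ℕ) (e : G.E) (j : Fin (k+2)) : (G.subdivide k).V :=
  if h : (j : ℕ) = 0 then Sum.inl (G.ends e).1
  else if h2 : (j : ℕ) = k+1 then Sum.inl (G.ends e).2
  else Sum.inr (e, ⟨(j : ℕ) - 1, by have := j.isLt; omega⟩)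

lemma chain_inr (G : FinGraph) (k : ℕ) (e : G.E) (j : Fin (k+2))
    (h1 : (j : ℕ) ≠ 0) (h2 : (j : ℕ) ≠ k+1) :
    chain G k e j = Sum.inr (e, ⟨(j : ℕ) - 1, by have := j.isLt; omega⟩) := by
  simp [chain, h1, h2]
  rfl

lemma chain_ends (G : FinGraph) (k : ℕ) (e : G.E) (j : Fin (k+1)) :
    ((G.subdivide k).ends (e, j)).1 = chain G k e j.castSucc ∧
    ((G.subdivide k).ends (e, j)).2 = chain G k e j.succ := by
  constructor
  · show (if h : (j : ℕ) = 0 then _ else _) = _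
    by_cases hj : (j : ℕ) = 0
    · refine (dif_pos hj).trans ?_
      rw [show chain G k e j.castSucc = Sum.inl (G.ends e).1 from dif_pos (by simpa using hj)]
    · refine (dif_neg hj).trans ?_
      rw [chain_inr G k e _ (by simpa using hj) (by simp; have := j.isLt; omega)]
      simp
      rfl
  · show (if h : (j : ℕ) = k then _ else _) = _
    by_cases hj : (j : ℕ) = k
    · refine (dif_pos hj).trans ?_
      rw [show chain G k e j.succ = Sum.inl (G.ends e).2 by
        rw [chain]; exact (dif_neg (by simp)).trans (dif_pos (by simp [hj]))]
    · refine (dif_neg hj).trans ?_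
      rw [chain_inr G k e _ (by simp) (by simp; have := j.isLt; omega)]
      simp
      rfl

lemma unsplit {G : FinGraph} {S : Type*} [TopologicalSpace S] {k : ℕ}
    (Γ : GraphEmb (G.subdivide k) S) : Nonempty (GraphEmb G S) := by
  classical
  have key : ∀ e : G.E, ∃ δ : Path (Γ.vmap (chain G k e 0))
      (Γ.vmap (chain G k e (Fin.last (k+1)))),
      Set.InjOn δ (Set.Ioo 0 1) ∧
      ∀ t ∈ Set.Ioo (0 : unitInterval) 1,
        (∃ j : Fin (k+1), ∃ s ∈ Set.Ioo (0 : unitInterval) 1, δ t = Γ.emap (e, j) s) ∨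
        (∃ i : Fin (k+2), (i : ℕ) ≠ 0 ∧ (i : ℕ) ≠ k+1 ∧ δ t = Γ.vmap (chain G k e i)) := by
    intro e
    set v : Fin (k+2) → S := fun i => Γ.vmap (chain G k e i) with hvdef
    set γ : ∀ j : Fin (k+1), Path (v j.castSucc) (v j.succ) := fun j =>
      (Γ.emap (e, j)).cast (congrArg Γ.vmap (chain_ends G k e j).1.symm)
        (congrArg Γ.vmap (chain_ends G k e j).2.symm) with hγdef
    have hγcoe : ∀ j, (γ j : unitInterval → S) = Γ.emap (e, j) := fun j => Path.cast_coe _ _ _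
    obtain ⟨δ, h1, h2⟩ := concat_exists (k+1) (by omega) v γ
      (fun j => by rw [hγcoe]; exact Γ.emap_injOn _)
      (fun j j' hne s hs s' hs' => by
        rw [hγcoe, hγcoe]
        exact Γ.emap_disjoint _ _ (fun hp => hne (Prod.ext_iff.1 hp).2) s hs s' hs')
      (fun j s hs i => by rw [hγcoe]; exact Γ.emap_avoid _ s hs _)
      (by
        intro i hi i' hi' h
        have h2 := Γ.vmap_injective h
        rw [chain_inr G k e i hi.1 hi.2, chain_inr G k e i' hi'.1 hi'.2] at h2
        have h3 := congrArg Fin.val (Prod.ext_iff.1 (Sum.inr_injective h2)).2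
        simp only at h3
        have hi1 := hi.1
        have hi1' := hi'.1
        apply Fin.ext
        omega)
    refine ⟨δ, h1, fun t ht => ?_⟩
    rcases h2 t ht with ⟨j, s, hs, hval⟩ | ⟨i, hi0, hik, hval⟩
    · exact Or.inl ⟨j, s, hs, by rw [hval, hγcoe]⟩
    · exact Or.inr ⟨i, hi0, hik, hval⟩
  choose δ hδinj hδchar using key
  refine ⟨⟨fun x => Γ.vmap (Sum.inl x),
    fun e => (δ e).cast (congrArg Γ.vmap (by simp [chain]; rfl))
      (congrArg Γ.vmap (by simp [chain]; rfl)),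
    fun a b h => Sum.inl_injective (Γ.vmap_injective h),
    fun e => by rw [Path.cast_coe]; exact hδinj e,
    ?_, ?_⟩⟩
  · intro e e' hne t ht t' ht'
    rw [Path.cast_coe, Path.cast_coe]
    rcases hδchar e t ht with ⟨j, s, hs, hval⟩ | ⟨i, hi0, hik, hval⟩ <;>
      rcases hδchar e' t' ht' with ⟨j', s', hs', hval'⟩ | ⟨i', hi0', hik', hval'⟩ <;>
      rw [hval, hval']
    · exact Γ.emap_disjoint _ _ (fun hp => hne (Prod.ext_iff.1 hp).1) s hs s' hs'
    · exact Γ.emap_avoid _ s hs _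
    · exact (Γ.emap_avoid _ s' hs' _).symm
    · intro h
      have h2 := Γ.vmap_injective h
      rw [chain_inr G k e i hi0 hik, chain_inr G k e' i' hi0' hik'] at h2
      exact hne (Prod.ext_iff.1 (Sum.inr_injective h2)).1
  · intro e t ht x
    rw [Path.cast_coe]
    rcases hδchar e t ht with ⟨j, s, hs, hval⟩ | ⟨i, hi0, hik, hval⟩ <;> rw [hval]
    · exact Γ.emap_avoid _ s hs _
    · intro h
      have h2 := Γ.vmap_injective h
      rw [chain_inr G k e i hi0 hik] at h2
      exact Sum.inr_ne_inl h2


end SubdivAux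

namespace SubdivAux

lemma split_exists {G : FinGraph} {S : Type*} [TopologicalSpace S] (Γ : GraphEmb G S)
    (k : ℕ) (u : G.E → ℕ → ℝ)
    (h0 : ∀ e, u e 0 = 0) (h1 : ∀ e, u e (k+1) = 1)
    (hm : ∀ e, ∀ i j : ℕ, i < j → j ≤ k+1 → u e i < u e j) :
    ∃ Γ' : GraphEmb (G.subdivide k) S,
      ∀ x : S, x ∈ Γ'.image →
        (∃ w, Γ'.vmap w = x) ∨
        (∃ (e : G.E) (s : ℝ) (hs : s ∈ unitInterval), 0 < s ∧ s < 1 ∧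
          x = Γ.emap e ⟨s, hs⟩ ∧
          ∀ i : ℕ, 1 ≤ i → i ≤ k → s = u e i → ∃ w, Γ'.vmap w = x) := by
  classical
  have hmono_le : ∀ e (a b : ℕ), a ≤ b → b ≤ k+1 → u e a ≤ u e b := by
    intro e a b hab hb
    rcases eq_or_lt_of_le hab with h | h
    · exact le_of_eq (congrArg (u e) h)
    · exact (hm e a b h hb).le
  have hbound : ∀ e (i : ℕ), i ≤ k+1 → u e i ∈ unitInterval := by
    intro e i hi
    constructor
    · rw [← h0 e]; exact hmono_le e 0 i (Nat.zero_le i) hi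
    · rw [← h1 e]; exact hmono_le e i (k+1) hi le_rfl
  have uinj : ∀ e (a b : ℕ), a ≤ k+1 → b ≤ k+1 → u e a = u e b → a = b := by
    intro e a b ha hb h
    by_contra hne
    rcases Nat.lt_or_ge a b with hab | hab
    · exact (hm e a b hab hb).ne h
    · exact (hm e b a (by omega) ha).ne h.symm
  -- the vertex map
  set vm : (G.subdivide k).V → S := fun x =>
    match x with
    | Sum.inl a => Γ.vmap a
    | Sum.inr (e, i) => Γ.emap e ⟨u e ((i : ℕ)+1), hbound e _ (by have := i.isLt; omega)⟩
    with hvm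
  -- endpoint identities
  have hx : ∀ (e : G.E) (j : Fin (k+1)),
      vm ((G.subdivide k).ends (e, j)).1
        = Γ.emap e ⟨u e (j : ℕ), hbound e _ (by have := j.isLt; omega)⟩ := by
    intro e j
    show vm (if h : (j : ℕ) = 0 then _ else _) = _
    by_cases hj : (j : ℕ) = 0
    · refine (congrArg vm (dif_pos hj)).trans ?_
      show Γ.vmap (G.ends e).1 = _
      refine (Γ.emap e).source.symm.trans (congrArg (Γ.emap e) ?_)
      apply Subtype.ext
      show ((0 : unitInterval) : ℝ) = u e (j : ℕ)
      rw [Set.Icc.coe_zero, hj, h0 e]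
    · refine (congrArg vm (dif_neg hj)).trans ?_
      show Γ.emap e ⟨u e ((j : ℕ) - 1 + 1), _⟩ = _
      congr 1
      apply Subtype.ext
      show u e ((j : ℕ) - 1 + 1) = u e (j : ℕ)
      congr 1
      omega
  have hy : ∀ (e : G.E) (j : Fin (k+1)),
      vm ((G.subdivide k).ends (e, j)).2
        = Γ.emap e ⟨u e ((j : ℕ)+1), hbound e _ (by have := j.isLt; omega)⟩ := by
    intro e j
    show vm (if h : (j : ℕ) = k then _ else _) = _
    by_cases hj : (j : ℕ) = k
    · refine (congrArg vm (dif_pos hj)).trans ?_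
      show Γ.vmap (G.ends e).2 = _
      refine (Γ.emap e).target.symm.trans (congrArg (Γ.emap e) ?_)
      apply Subtype.ext
      show ((1 : unitInterval) : ℝ) = u e ((j : ℕ)+1)
      rw [Set.Icc.coe_one, hj, h1 e]
    · exact (congrArg vm (dif_neg hj)).trans rfl
  -- the pieces
  have hab : ∀ (e : G.E) (j : Fin (k+1)), u e (j : ℕ) < u e ((j : ℕ)+1) :=
    fun e j => hm e _ _ (Nat.lt_succ_self _) (by have := j.isLt; omega)
  set em : ∀ p : (G.subdivide k).E, Path (vm ((G.subdivide k).ends p).1)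
      (vm ((G.subdivide k).ends p).2) := fun p =>
    (subIcc (Γ.emap p.1) (hbound p.1 _ (by have := p.2.isLt; omega)).1 (hab p.1 p.2)
      (hbound p.1 _ (by have := p.2.isLt; omega)).2).cast (hx p.1 p.2) (hy p.1 p.2)
    with hem
  have hmem : ∀ (e : G.E) (j : Fin (k+1)) (t : unitInterval),
      u e (j : ℕ) + t * (u e ((j : ℕ)+1) - u e (j : ℕ)) ∈ unitInterval := fun e j t =>
    subIcc_mem (hbound e _ (by have := j.isLt; omega)).1 (hab e j)
      (hbound e _ (by have := j.isLt; omega)).2 t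
  have emcoe : ∀ (e : G.E) (j : Fin (k+1)) (t : unitInterval),
      em (e, j) t = Γ.emap e ⟨u e (j : ℕ) + t * (u e ((j : ℕ)+1) - u e (j : ℕ)),
        hmem e j t⟩ := by
    intro e j t
    show (Path.cast _ _ _ : Path _ _) t = _
    rw [Path.cast_coe]
    rfl
  -- parameter facts
  have hparam : ∀ (e : G.E) (j : Fin (k+1)) (t : unitInterval),
      t ∈ Set.Ioo (0 : unitInterval) 1 →
      u e (j : ℕ) < u e (j : ℕ) + t * (u e ((j : ℕ)+1) - u e (j : ℕ)) ∧
      u e (j : ℕ) + t * (u e ((j : ℕ)+1) - u e (j : ℕ)) < u e ((j : ℕ)+1) := by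
    intro e j t ht
    obtain ⟨ht0, ht1⟩ := mem_Ioo_coe.1 ht
    have := hab e j
    constructor <;> nlinarith
  have hparam01 : ∀ (e : G.E) (j : Fin (k+1)) (t : unitInterval),
      t ∈ Set.Ioo (0 : unitInterval) 1 →
      (⟨u e (j : ℕ) + t * (u e ((j : ℕ)+1) - u e (j : ℕ)), hmem e j t⟩ : unitInterval)
        ∈ Set.Ioo (0 : unitInterval) 1 := by
    intro e j t ht
    obtain ⟨hp1, hp2⟩ := hparam e j t ht
    have hb0 : (0:ℝ) ≤ u e (j : ℕ) := (hbound e _ (by have := j.isLt; omega)).1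
    have hb1 : u e ((j : ℕ)+1) ≤ 1 := (hbound e _ (by have := j.isLt; omega)).2
    exact mem_Ioo_coe.2 ⟨by simp only; linarith, by simp only; linarith⟩
  -- interior parameters of the new vertices
  have hvint : ∀ (e : G.E) (i : Fin k),
      (⟨u e ((i : ℕ)+1), hbound e _ (by have := i.isLt; omega)⟩ : unitInterval)
        ∈ Set.Ioo (0 : unitInterval) 1 := by
    intro e i
    apply mem_Ioo_coe.2
    constructor
    · show 0 < u e ((i : ℕ)+1)
      rw [← h0 e]
      exact hm e 0 _ (by omega) (by have := i.isLt; omega)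
    · show u e ((i : ℕ)+1) < 1
      rw [← h1 e]
      exact hm e _ (k+1) (by have := i.isLt; omega) le_rfl
  refine ⟨⟨vm, em, ?_, ?_, ?_, ?_⟩, ?_⟩
  · -- vmap injective
    rintro (a | ⟨e, i⟩) (b | ⟨e', i'⟩) h
    · exact congrArg Sum.inl (Γ.vmap_injective h)
    · exact absurd h.symm (Γ.emap_avoid e' _ (hvint e' i') a)
    · exact absurd h (Γ.emap_avoid e _ (hvint e i) b)
    · by_cases hee : e = e'
      · subst hee
        have h2 := Γ.emap_injOn e (hvint e i) (hvint e i') h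
        have h3 := congrArg Subtype.val h2
        simp only at h3
        have h4 := uinj e _ _ (by have := i.isLt; omega) (by have := i'.isLt; omega) h3
        have : i = i' := Fin.ext (by omega)
        rw [this]
      · exact absurd h (Γ.emap_disjoint e e' hee _ (hvint e i) _ (hvint e' i'))
  · -- injOn pieces
    rintro ⟨e, j⟩
    intro t ht t' ht' heq
    rw [emcoe, emcoe] at heq
    have h2 := Γ.emap_injOn e (hparam01 e j t ht) (hparam01 e j t' ht') heq
    have h3 := congrArg Subtype.val h2
    simp only at h3
    have hba := hab e j
    apply Subtype.ext
    nlinarith [sub_ne_zero.2 hba.ne']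
  · -- disjoint pieces
    rintro ⟨e, j⟩ ⟨e', j'⟩ hne t ht t' ht' heq
    rw [emcoe, emcoe] at heq
    by_cases hee : e = e'
    · subst hee
      have hjj : (j : ℕ) ≠ (j' : ℕ) := fun h =>
        hne (by rw [show j = j' from Fin.ext h])
      have h2 := Γ.emap_injOn e (hparam01 e j t ht) (hparam01 e j' t' ht') heq
      have h3 := congrArg Subtype.val h2
      simp only at h3
      obtain ⟨hA1, hA2⟩ := hparam e j t ht
      obtain ⟨hB1, hB2⟩ := hparam e j' t' ht'
      rcases Nat.lt_or_ge (j : ℕ) (j' : ℕ) with hlt | hge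
      · have : u e ((j : ℕ)+1) ≤ u e (j' : ℕ) :=
          hmono_le e _ _ (by omega) (by have := j'.isLt; omega)
        linarith
      · have hlt : (j' : ℕ) < (j : ℕ) := by omega
        have : u e ((j' : ℕ)+1) ≤ u e (j : ℕ) :=
          hmono_le e _ _ (by omega) (by have := j.isLt; omega)
        linarith
    · exact Γ.emap_disjoint e e' hee _ (hparam01 e j t ht) _ (hparam01 e' j' t' ht') heq
  · -- avoid vertices
    rintro ⟨e, j⟩ t ht (a | ⟨e', i'⟩) heq
    · rw [emcoe] at heq
      exact Γ.emap_avoid e _ (hparam01 e j t ht) a heq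
    · rw [emcoe] at heq
      by_cases hee : e = e'
      · subst hee
        have h2 := Γ.emap_injOn e (hparam01 e j t ht) (hvint e i') heq
        have h3 := congrArg Subtype.val h2
        simp only at h3
        obtain ⟨hA1, hA2⟩ := hparam e j t ht
        rcases Nat.lt_or_ge ((i' : ℕ)+1) ((j : ℕ)+1) with hlt | hge
        · have : u e ((i' : ℕ)+1) ≤ u e (j : ℕ) :=
            hmono_le e _ _ (by omega) (by have := j.isLt; omega)
          linarith
        · have : u e ((j : ℕ)+1) ≤ u e ((i' : ℕ)+1) :=
            hmono_le e _ _ (by omega) (by have := i'.isLt; omega)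
          linarith
      · exact Γ.emap_disjoint e e' hee _ (hparam01 e j t ht) _ (hvint e' i') heq
  · -- image characterization
    intro x hxmem
    rcases hxmem with ⟨w, hw⟩ | hxmem
    · exact Or.inl ⟨w, hw⟩
    · rw [Set.mem_iUnion] at hxmem
      obtain ⟨⟨e, j⟩, t, hval⟩ := hxmem
      rw [emcoe] at hval
      set s : ℝ := u e (j : ℕ) + t * (u e ((j : ℕ)+1) - u e (j : ℕ)) with hsdef
      have hs : s ∈ unitInterval := hmem e j t
      by_cases hs0 : s = 0
      · left
        refine ⟨Sum.inl (G.ends e).1, ?_⟩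
        show Γ.vmap (G.ends e).1 = x
        refine (Γ.emap e).source.symm.trans (Eq.trans (congrArg (Γ.emap e) ?_) hval)
        apply Subtype.ext
        show ((0 : unitInterval) : ℝ) = s
        rw [Set.Icc.coe_zero, hs0]
      · by_cases hs1 : s = 1
        · left
          refine ⟨Sum.inl (G.ends e).2, ?_⟩
          show Γ.vmap (G.ends e).2 = x
          refine (Γ.emap e).target.symm.trans (Eq.trans (congrArg (Γ.emap e) ?_) hval)
          apply Subtype.ext
          show ((1 : unitInterval) : ℝ) = s
          rw [Set.Icc.coe_one, hs1]
        · right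
          refine ⟨e, s, hs, lt_of_le_of_ne hs.1 (Ne.symm hs0), lt_of_le_of_ne hs.2 hs1,
            hval.symm, ?_⟩
          intro i h1i hik hsi
          refine ⟨Sum.inr (e, ⟨i - 1, by omega⟩), ?_⟩
          show Γ.emap e ⟨u e ((i - 1) + 1), _⟩ = x
          refine Eq.trans (congrArg (Γ.emap e) ?_) hval
          apply Subtype.ext
          show u e ((i - 1) + 1) = s
          rw [hsi]
          congr 1
          omega

end SubdivAux

open SubdivAux in
/-- Subdividing each edge of `G` (any number of times) does not
change embeddability into a 2-complex `C`; moreover if `G` embeds into `C`, `C` has no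
3-book and `k` is the number of singular nodes of `C`, then the `k`-fold subdivision
admits an embedding in which every singular node lying in the image is the image of a
vertex. -/
theorem subdivision_and_singular_nodes (C : TwoComplex) (G : FinGraph) :
    (∀ k : ℕ, Nonempty (GraphEmb G (↥C.space)) ↔
      Nonempty (GraphEmb (G.subdivide k) (↥C.space))) ∧
    (¬ C.HasThreeBook → Nonempty (GraphEmb G (↥C.space)) →
      ∀ k : ℕ, k = Nat.card {p : Fin C.n // IsSingularNode C p} →
        ∃ Γ : GraphEmb (G.subdivide k) (↥C.space),
          ∀ (p : Fin C.n) (hp : IsSingularNode C p) (hmem : nodePoint C p ∈ C.space),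
            (⟨nodePoint C p, hmem⟩ : ↥C.space) ∈ Γ.image →
              ∃ w : (G.subdivide k).V, Γ.vmap w = ⟨nodePoint C p, hmem⟩) := by
  classical
  constructor
  · intro k
    constructor
    · rintro ⟨Γ⟩
      have hk1 : (0 : ℝ) < (k : ℝ) + 1 := by positivity
      obtain ⟨Γ', -⟩ := split_exists Γ k (fun _ i => (i : ℝ) / ((k : ℝ) + 1))
        (fun e => by simp)
        (fun e => by push_cast; field_simp)
        (fun e i j hij hj => by
          exact (div_lt_div_iff_of_pos_right hk1).2 (by exact_mod_cast hij))
      exact ⟨Γ'⟩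
    · rintro ⟨Γ⟩
      exact unsplit Γ
  · rintro - ⟨Γ⟩ k hk
    haveI : Infinite ↥(Set.Ioo (0 : ℝ) 1) := Set.Ioo.infinite (by norm_num)
    -- choose per edge a k-element set of interior parameters containing all singular hits
    have key : ∀ e : G.E, ∃ T : Finset ↥(Set.Ioo (0 : ℝ) 1),
        (∀ r : ↥(Set.Ioo (0 : ℝ) 1),
          (∃ (hsub : (r : ℝ) ∈ unitInterval) (p : Fin C.n) (_ : IsSingularNode C p)
            (hmemp : nodePoint C p ∈ C.space),
            Γ.emap e ⟨(r : ℝ), hsub⟩ = ⟨nodePoint C p, hmemp⟩) → r ∈ T) ∧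
        T.card = k := by
      intro e
      set A : Set ↥(Set.Ioo (0 : ℝ) 1) := {r |
        ∃ (hsub : (r : ℝ) ∈ unitInterval) (p : Fin C.n) (_ : IsSingularNode C p)
          (hmemp : nodePoint C p ∈ C.space),
          Γ.emap e ⟨(r : ℝ), hsub⟩ = ⟨nodePoint C p, hmemp⟩} with hA
      -- injection from A to singular nodes
      have hmemI : ∀ r : ↥(Set.Ioo (0 : ℝ) 1), (r : ℝ) ∈ unitInterval :=
        fun r => ⟨r.2.1.le, r.2.2.le⟩
      have hIooI : ∀ r : ↥(Set.Ioo (0 : ℝ) 1),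
          (⟨(r : ℝ), hmemI r⟩ : unitInterval) ∈ Set.Ioo (0 : unitInterval) 1 :=
        fun r => mem_Ioo_coe.2 ⟨r.2.1, r.2.2⟩
      set F : ↥A → {p : Fin C.n // IsSingularNode C p} := fun ra =>
        ⟨ra.2.choose_spec.choose, ra.2.choose_spec.choose_spec.choose⟩ with hF
      have hFval : ∀ ra : ↥A, ∃ (hsub : ((ra : ↥(Set.Ioo (0 : ℝ) 1)) : ℝ) ∈ unitInterval)
          (hmemp : nodePoint C (F ra).1 ∈ C.space),
          Γ.emap e ⟨_, hsub⟩ = ⟨nodePoint C (F ra).1, hmemp⟩ := by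
        intro ra
        exact ⟨ra.2.choose, ra.2.choose_spec.choose_spec.choose_spec.choose,
          ra.2.choose_spec.choose_spec.choose_spec.choose_spec⟩
      have hFinj : Function.Injective F := by
        intro r1 r2 h
        obtain ⟨hs1, hm1, hv1⟩ := hFval r1
        obtain ⟨hs2, hm2, hv2⟩ := hFval r2
        have hpt : (⟨nodePoint C (F r1).1, hm1⟩ : ↥C.space)
            = ⟨nodePoint C (F r2).1, hm2⟩ :=
          Subtype.ext (congrArg (fun q : {p : Fin C.n // IsSingularNode C p} =>
            nodePoint C q.1) h)
        have heq2 : Γ.emap e ⟨((r1 : ↥(Set.Ioo (0 : ℝ) 1)) : ℝ), hs1⟩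
            = Γ.emap e ⟨((r2 : ↥(Set.Ioo (0 : ℝ) 1)) : ℝ), hs2⟩ :=
          hv1.trans (hpt.trans hv2.symm)
        have h2 := Γ.emap_injOn e (hIooI r1) (hIooI r2) heq2
        have h3 : ((r1 : ↥(Set.Ioo (0 : ℝ) 1)) : ℝ) = ((r2 : ↥(Set.Ioo (0 : ℝ) 1)) : ℝ) :=
          congrArg (fun z : unitInterval => (z : ℝ)) h2
        exact Subtype.ext (Subtype.ext h3)
      haveI hfinA : Finite ↥A := Finite.of_injective F hFinj
      have hAfin : A.Finite := Set.finite_coe_iff.mp hfinA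
      have hle : A.ncard ≤ k := by
        rw [← Nat.card_coe_set_eq, hk]
        exact Nat.card_le_card_of_injective F hFinj
      obtain ⟨T, hTsub, hTcard⟩ := Infinite.exists_superset_card_eq hAfin.toFinset k
        (by rwa [← Set.ncard_eq_toFinset_card A hAfin])
      refine ⟨T, fun r hr => hTsub (hAfin.mem_toFinset.2 hr), hTcard⟩
    choose T hTmem hTcard using key
    -- assemble the subdivision parameters
    set FS : G.E → Finset ℝ := fun e =>
      insert (0 : ℝ) (insert (1 : ℝ) ((T e).map ⟨Subtype.val, Subtype.val_injective⟩)) with hFS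
    have hmapmem : ∀ e (x : ℝ), x ∈ (T e).map ⟨Subtype.val, Subtype.val_injective⟩ →
        0 < x ∧ x < 1 := by
      intro e x hx
      obtain ⟨a, _, rfl⟩ := Finset.mem_map.1 hx
      exact ⟨a.2.1, a.2.2⟩
    have hFScard : ∀ e, (FS e).card = k + 2 := by
      intro e
      rw [hFS]
      rw [Finset.card_insert_of_notMem, Finset.card_insert_of_notMem, Finset.card_map,
        hTcard]
      · intro hx
        exact absurd rfl (hmapmem e 1 hx).2.ne
      · intro hx
        rcases Finset.mem_insert.1 hx with h | h
        · norm_num at h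
        · exact absurd rfl (hmapmem e 0 h).1.ne
    have hFSbound : ∀ e, ∀ x ∈ FS e, 0 ≤ x ∧ x ≤ 1 := by
      intro e x hx
      rcases Finset.mem_insert.1 hx with rfl | hx
      · norm_num
      · rcases Finset.mem_insert.1 hx with rfl | hx
        · norm_num
        · exact ⟨(hmapmem e x hx).1.le, (hmapmem e x hx).2.le⟩
    set u : G.E → ℕ → ℝ := fun e i =>
      if h : i < k + 2 then ((FS e).orderIsoOfFin (hFScard e) ⟨i, h⟩ : ℝ) else 2 with hu
    have humem : ∀ e (i : ℕ) (h : i < k + 2), u e i ∈ FS e := by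
      intro e i h
      rw [hu]
      simp only [dif_pos h]
      exact ((FS e).orderIsoOfFin (hFScard e) ⟨i, h⟩).2
    have hmono : ∀ e, ∀ i j : ℕ, i < j → j ≤ k + 1 → u e i < u e j := by
      intro e i j hij hj
      rw [hu]
      simp only [dif_pos (by omega : i < k + 2), dif_pos (by omega : j < k + 2)]
      exact Subtype.coe_lt_coe.2 (((FS e).orderIsoOfFin (hFScard e)).strictMono
        (by exact Fin.mk_lt_mk.2 hij))
    have husurj : ∀ e (x : ℝ), x ∈ FS e → ∃ i : ℕ, i < k + 2 ∧ u e i = x := by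
      intro e x hx
      set i0 : Fin (k + 2) := ((FS e).orderIsoOfFin (hFScard e)).symm ⟨x, hx⟩ with hi0
      refine ⟨(i0 : ℕ), i0.isLt, ?_⟩
      have hieta : (⟨(i0 : ℕ), i0.isLt⟩ : Fin (k + 2)) = i0 := by apply Fin.ext; rfl
      have hval : u e (i0 : ℕ)
          = (((FS e).orderIsoOfFin (hFScard e)) ⟨(i0 : ℕ), i0.isLt⟩ : ℝ) := dif_pos i0.isLt
      rw [hval, hieta, hi0, OrderIso.apply_symm_apply]
    have hu0 : ∀ e, u e 0 = 0 := by
      intro e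
      obtain ⟨i, hi, hival⟩ := husurj e 0 (Finset.mem_insert_self _ _)
      have h1 : u e 0 ≤ u e i := by
        rcases Nat.eq_zero_or_pos i with rfl | hpos
        · exact le_rfl
        · exact (hmono e 0 i hpos (by omega)).le
      have h2 : 0 ≤ u e 0 := (hFSbound e _ (humem e 0 (by omega))).1
      rw [hival] at h1
      linarith
    have hu1 : ∀ e, u e (k + 1) = 1 := by
      intro e
      obtain ⟨i, hi, hival⟩ := husurj e 1
        (Finset.mem_insert_of_mem (Finset.mem_insert_self _ _))
      have h1 : u e i ≤ u e (k + 1) := by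
        rcases Nat.lt_or_ge i (k + 1) with hlt | hge
        · exact (hmono e i (k + 1) hlt le_rfl).le
        · have : i = k + 1 := by omega
          rw [this]
      have h2 : u e (k + 1) ≤ 1 := (hFSbound e _ (humem e (k + 1) (by omega))).2
      rw [hival] at h1
      linarith
    obtain ⟨Γ', hchar⟩ := split_exists Γ k u hu0 hu1 hmono
    refine ⟨Γ', ?_⟩
    intro p hp hmem hmemim
    rcases hchar _ hmemim with ⟨w, hw⟩ | ⟨e, s, hs, hs0, hs1, hxeq, hconc⟩
    · exact ⟨w, hw⟩
    · have hrT : (⟨s, hs0, hs1⟩ : ↥(Set.Ioo (0 : ℝ) 1)) ∈ T e :=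
        hTmem e _ ⟨hs, p, hp, hmem, hxeq.symm⟩
      have hsF : s ∈ FS e := by
        refine Finset.mem_insert_of_mem (Finset.mem_insert_of_mem ?_)
        exact Finset.mem_map.2 ⟨⟨s, hs0, hs1⟩, hrT, rfl⟩
      obtain ⟨i, hi, hival⟩ := husurj e s hsF
      have hi1 : 1 ≤ i := by
        rcases Nat.eq_zero_or_pos i with rfl | hpos
        · rw [hu0 e] at hival; exact absurd hival.symm hs0.ne'
        · exact hpos
      have hik : i ≤ k := by
        by_contra hgt
        have : i = k + 1 := by omega
        rw [this, hu1 e] at hival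
        exact hs1.ne hival.symm
      exact hconc i hi1 hik hival.symm
end
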